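/- arXiv:2104.04789 — 12 statements merged into one kernel-verified Lean document; each statement's English description precedes it below -/
import Mathlib

section
/- Let G be a finite nilpotent group of odd order and let O be a conjugacy class of G. Then either O is abelian as a subrack (that is, x*y*x⁻¹ = y for all x, y ∈ O, equivalently all elements of O commute pairwise), or O is of type C. -/
/-- A subset `X` of a group `G` is a subrack if it is closed under conjugation
and inverse conjugation. -/
def IsSubrack {G : Type*} [Group G] (X : Set G) : Prop :=
  ∀ x ∈ X, ∀ y ∈ X, x * y * x⁻¹ ∈ X ∧ x⁻¹ * y * x ∈ X

/-- A finite subrack `X` of a group `G` is of type C. -/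
def IsTypeC {G : Type*} [Group G] (X : Set G) : Prop :=
  ∃ R S : Set G, R.Nonempty ∧ S.Nonempty ∧ Disjoint R S ∧
    R ∪ S ⊆ X ∧ IsSubrack (R ∪ S) ∧
    ∃ r ∈ R, ∃ s ∈ S,
      r * s * r⁻¹ ≠ s ∧
      R = {y | ∃ h ∈ Subgroup.closure (R ∪ S), h * r * h⁻¹ = y} ∧
      S = {y | ∃ h ∈ Subgroup.closure (R ∪ S), h * s * h⁻¹ = y} ∧
      (2 < min (Nat.card R) (Nat.card S) ∨ 4 < max (Nat.card R) (Nat.card S))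

/-!
If two elements `y, z` of the class do not commute, let `R` and `S` be their orbits under
conjugation by `H = ⟨y, z⟩`. These orbits are disjoint: if `z = h y h⁻¹` with `h ∈ H`, then `H` is
generated by `y` modulo `[H, H]`, and a nilpotent group that is cyclic modulo its commutator
subgroup is abelian (induct on the nilpotency class through `H ⧸ Z(H)`), contradicting `yz ≠ zy`.
Each orbit has odd size, dividing `|H|`, and contains two distinct elements (`y` and `z y z⁻¹`,
resp. `z` and `y z y⁻¹`), so it has at least three.
-/

open Subgroup
open scoped commutatorElement

section Nilpotent

variable {G : Type*} [Group G]

theorem conj_mem_zpowers_sup_commutator (a g : G) :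
    g * a * g⁻¹ ∈ zpowers a ⊔ commutator G := by
  have : g * a * g⁻¹ = ⁅g, a⁆ * a := by rw [commutatorElement_def]; group
  rw [this, sup_comm]
  exact mul_mem_sup (commutator_mem_commutator (mem_top g) (mem_top a)) (mem_zpowers a)

variable [Group.IsNilpotent G]

theorem isMulCommutative_of_zpowers_sup_commutator_eq_top (a : G)
    (h : zpowers a ⊔ commutator G = ⊤) : IsMulCommutative G := by
  revert a
  refine Group.nilpotent_center_quotient_ind
    (P := fun G _ _ => ∀ a : G, zpowers a ⊔ commutator G = ⊤ → IsMulCommutative G) G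
    (fun _ _ _ _ _ => ⟨⟨fun _ _ => Subsingleton.elim _ _⟩⟩) fun G _ _ ih a h => ?_
  set π := QuotientGroup.mk' (center G)
  have hπ : zpowers (π a) ⊔ commutator (G ⧸ center G) = ⊤ := by
    have hsurj : Function.Surjective π := QuotientGroup.mk'_surjective _
    rw [← MonoidHom.map_zpowers, ← map_top_of_surjective π hsurj, ← h, Subgroup.map_sup,
      map_commutator_eq, MonoidHom.range_eq_top.mpr hsurj]
    rfl
  -- By induction `G ⧸ center G` is abelian, so `π a` alone generates it.
  have : IsCyclic (G ⧸ center G) := by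
    have hbot := (commutator_eq_bot_iff _).mpr (ih (π a) hπ)
    exact isCyclic_iff_exists_zpowers_eq_top.mpr ⟨π a, by rwa [hbot, sup_bot_eq] at hπ⟩
  exact π.isMulCommutative_of_isCyclic_of_ker_le_center (QuotientGroup.ker_mk' _).le

theorem commute_of_conj_eq_of_mem_closure_pair {a b h : G} (hh : h ∈ closure {a, b})
    (hb : h * a * h⁻¹ = b) : Commute a b := by
  set H := closure ({a, b} : Set G)
  have ha : a ∈ H := subset_closure (by simp)
  have hgen : closure {(⟨a, ha⟩ : H), ⟨h, hh⟩ * ⟨a, ha⟩ * ⟨h, hh⟩⁻¹} = ⊤ := by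
    rw [← closure_closure_coe_preimage (k := {a, b})]
    congr 1
    ext ⟨w, _⟩
    simp [Subtype.ext_iff, hb]
  have : IsMulCommutative H := isMulCommutative_of_zpowers_sup_commutator_eq_top ⟨a, ha⟩ <|
    top_le_iff.mp <| hgen ▸ (closure_le _).mpr <| by
      rintro w (rfl | rfl)
      · exact mem_sup_left (mem_zpowers _)
      · exact conj_mem_zpowers_sup_commutator _ _
  simpa [Commute, SemiconjBy, Subtype.ext_iff, hb] using
    this.is_comm.comm (⟨a, ha⟩ : H) (⟨h, hh⟩ * ⟨a, ha⟩ * ⟨h, hh⟩⁻¹)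

end Nilpotent

section ConjOrbit

variable {G : Type*} [Group G] {H : Subgroup G} {g w y z : G}

def conjOrbit (H : Subgroup G) (y : G) : Set G := {w | ∃ h ∈ H, h * y * h⁻¹ = w}

theorem mem_conjOrbit_self : y ∈ conjOrbit H y := ⟨1, H.one_mem, by group⟩

theorem conj_mem_conjOrbit (hg : g ∈ H) (hw : w ∈ conjOrbit H y) :
    g * w * g⁻¹ ∈ conjOrbit H y := by
  obtain ⟨h, hh, rfl⟩ := hw
  exact ⟨g * h, H.mul_mem hg hh, by group⟩

theorem conjOrbit_subset (hy : y ∈ H) : conjOrbit H y ⊆ H := by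
  rintro w ⟨h, hh, rfl⟩
  exact H.mul_mem (H.mul_mem hh hy) (H.inv_mem hh)

theorem disjoint_conjOrbit (h : ∀ g ∈ H, g * y * g⁻¹ ≠ z) :
    Disjoint (conjOrbit H y) (conjOrbit H z) := by
  refine Set.disjoint_left.mpr ?_
  rintro w ⟨h₁, hh₁, rfl⟩ ⟨h₂, hh₂, he⟩
  refine h (h₂⁻¹ * h₁) (H.mul_mem (H.inv_mem hh₂) hh₁) ?_
  calc h₂⁻¹ * h₁ * y * (h₂⁻¹ * h₁)⁻¹ = h₂⁻¹ * (h₁ * y * h₁⁻¹) * h₂ := by group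
    _ = z := by rw [← he]; group

theorem closure_conjOrbit_union_conjOrbit :
    closure (conjOrbit (closure {y, z}) y ∪ conjOrbit (closure {y, z}) z) = closure {y, z} := by
  refine le_antisymm ((closure_le _).mpr <| Set.union_subset ?_ ?_) (closure_mono ?_)
  · exact conjOrbit_subset (subset_closure (by simp))
  · exact conjOrbit_subset (subset_closure (by simp))
  · rintro w (rfl | rfl)
    exacts [Or.inl mem_conjOrbit_self, Or.inr mem_conjOrbit_self]

theorem card_conjOrbit_dvd (H : Subgroup G) (y : G) : Nat.card (conjOrbit H y) ∣ Nat.card H := by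
  let K : Subgroup (ConjAct G) := H.map ConjAct.toConjAct.toMonoidHom
  have horbit : conjOrbit H y = MulAction.orbit K y := by
    ext w
    constructor
    · rintro ⟨h, hh, rfl⟩
      exact ⟨⟨ConjAct.toConjAct h, mem_map_of_mem _ hh⟩, ConjAct.toConjAct_smul h y⟩
    · rintro ⟨⟨_, h, hh, rfl⟩, rfl⟩
      exact ⟨h, hh, (ConjAct.toConjAct_smul h y).symm⟩
  rw [horbit, Nat.card_coe_set_eq, ← MulAction.index_stabilizer,
    ← card_map_of_injective (f := ConjAct.toConjAct.toMonoidHom) ConjAct.toConjAct.injective]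
  exact index_dvd_card _

theorem two_lt_card_conjOrbit (hodd : Odd (Nat.card H)) (hg : g ∈ H) (hne : g * y * g⁻¹ ≠ y) :
    2 < Nat.card (conjOrbit H y) := by
  have hoddOrbit := hodd.of_dvd_nat (card_conjOrbit_dvd H y)
  have : Finite (conjOrbit H y) := Nat.finite_of_card_ne_zero hoddOrbit.pos.ne'
  have : 1 < Nat.card (conjOrbit H y) :=
    Finite.one_lt_card_iff_nontrivial.mpr ⟨⟨⟨y, mem_conjOrbit_self⟩, ⟨_, g, hg, rfl⟩,
      fun h => hne (congrArg Subtype.val h).symm⟩⟩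
  obtain ⟨k, hk⟩ := hoddOrbit
  omega

theorem isSubrack_of_conj_mem {X : Set G} (hXH : X ⊆ H) (hX : ∀ g ∈ H, ∀ w ∈ X, g * w * g⁻¹ ∈ X) :
    IsSubrack X := fun u hu w hw =>
  ⟨hX u (hXH hu) w hw, by simpa using hX u⁻¹ (H.inv_mem (hXH hu)) w hw⟩

end ConjOrbit

theorem isTypeC_of_not_commute {G : Type*} [Group G] [Group.IsNilpotent G]
    (hodd : Odd (Nat.card G)) {X : Set G} (hX : ∀ g, ∀ w ∈ X, g * w * g⁻¹ ∈ X) {y z : G}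
    (hy : y ∈ X) (hz : z ∈ X) (hyz : y * z * y⁻¹ ≠ z) : IsTypeC X := by
  set H := closure ({y, z} : Set G)
  have hyH : y ∈ H := subset_closure (by simp)
  have hzH : z ∈ H := subset_closure (by simp)
  have hoddH : Odd (Nat.card H) := hodd.of_dvd_nat (card_subgroup_dvd_card H)
  have hnconj : ∀ h ∈ H, h * y * h⁻¹ ≠ z := fun h hh hconj =>
    hyz (commute_of_conj_eq_of_mem_closure_pair hh hconj).mul_inv_cancel
  have hzy : z * y * z⁻¹ ≠ y := fun h =>
    hyz (Commute.mul_inv_cancel (mul_inv_eq_iff_eq_mul.mp h).symm)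
  have hsubrack : IsSubrack (conjOrbit H y ∪ conjOrbit H z) :=
    isSubrack_of_conj_mem (Set.union_subset (conjOrbit_subset hyH) (conjOrbit_subset hzH))
      fun g hg w hw => hw.imp (conj_mem_conjOrbit hg) (conj_mem_conjOrbit hg)
  have hsubset : conjOrbit H y ∪ conjOrbit H z ⊆ X := by
    rintro w (⟨h, -, rfl⟩ | ⟨h, -, rfl⟩)
    exacts [hX h y hy, hX h z hz]
  refine ⟨conjOrbit H y, conjOrbit H z, ⟨y, mem_conjOrbit_self⟩, ⟨z, mem_conjOrbit_self⟩,
    disjoint_conjOrbit hnconj, hsubset, hsubrack, y, mem_conjOrbit_self, z, mem_conjOrbit_self,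
    hyz, ?_, ?_, Or.inl (lt_min ?_ ?_)⟩
  · rw [closure_conjOrbit_union_conjOrbit]; rfl
  · rw [closure_conjOrbit_union_conjOrbit]; rfl
  · exact two_lt_card_conjOrbit hoddH hzH hzy
  · exact two_lt_card_conjOrbit hoddH hyH hyz

/-- Every conjugacy class of a finite nilpotent group of odd order is either abelian
as a subrack or of type C. -/
theorem conjclass_odd_nilpotent_abelian_or_typeC
    {G : Type*} [Group G] [Fintype G] (hnil : Group.IsNilpotent G)
    (hodd : Odd (Fintype.card G)) (x : G) :
    (∀ y ∈ {y : G | ∃ g : G, g * x * g⁻¹ = y}, ∀ z ∈ {y : G | ∃ g : G, g * x * g⁻¹ = y},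
      y * z * y⁻¹ = z) ∨
    IsTypeC {y : G | ∃ g : G, g * x * g⁻¹ = y} := by
  refine or_iff_not_imp_left.mpr fun hnab => ?_
  push Not at hnab
  obtain ⟨y, hy, z, hz, hyz⟩ := hnab
  refine isTypeC_of_not_commute (Nat.card_eq_fintype_card (α := G) ▸ hodd) ?_ hy hz hyz
  rintro g _ ⟨g', rfl⟩
  exact ⟨g * g', by group⟩
end

section
/- Let p be an odd prime and P a finite p-group. Let r, s ∈ P and let H be the subgroup of P generated by {r, s}. If s = h*r*h⁻¹ for some h ∈ H, then r and s commute. -/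
/-!
The subgroup `H = ⟨r, s⟩` is nilpotent, and since `s` is an `H`-conjugate of `r`, the normal
closure of `r` in `H` is all of `H`. In a finite nilpotent group every maximal subgroup is normal,
so an element whose normal closure is the whole group lies in no maximal subgroup and therefore
generates the group. Hence `H` is cyclic, generated by `r`, and `s` is a power of `r`.
-/

open Subgroup

theorem Group.zpowers_eq_top_of_normalClosure_eq_top {G : Type*} [Group G] [Group.IsNilpotent G]
    [IsCoatomic (Subgroup G)] {x : G} (h : normalClosure {x} = ⊤) : zpowers x = ⊤ := by
  refine (eq_top_or_exists_le_coatom (zpowers x)).resolve_right ?_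
  rintro ⟨M, hM, hxM⟩
  have : M.Normal := normalizerCondition_of_isNilpotent.normal_of_coatom M hM
  refine hM.1 (eq_top_iff.mpr ?_)
  rw [← h]
  exact normalClosure_le_normal (Set.singleton_subset_iff.mpr (hxM (mem_zpowers x)))

theorem Group.commute_of_isConj_of_closure_pair_eq_top {G : Type*} [Group G]
    [Group.IsNilpotent G] [IsCoatomic (Subgroup G)] {x y : G} (hconj : IsConj x y)
    (hgen : closure {x, y} = ⊤) : Commute x y := by
  have hx : x ∈ normalClosure {x} := subset_normalClosure rfl
  have hnc : normalClosure {x} = ⊤ := by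
    obtain ⟨g, rfl⟩ := isConj_iff.mp hconj
    rw [eq_top_iff, ← hgen, closure_le, Set.insert_subset_iff, Set.singleton_subset_iff]
    exact ⟨hx, normalClosure_normal.conj_mem x hx g⟩
  obtain ⟨n, rfl⟩ : y ∈ zpowers x := zpowers_eq_top_of_normalClosure_eq_top hnc ▸ mem_top y
  exact (Commute.refl x).zpow_right n

theorem commute_of_conj_in_closure_of_odd_pGroup_general
    {p : ℕ} (hp : p.Prime) {P : Type*} [Group P] [Finite P]
    (hP : IsPGroup p P) (r s : P)
    (hconj : ∃ h ∈ Subgroup.closure ({r, s} : Set P), h * r * h⁻¹ = s) :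
    r * s = s * r := by
  have : Fact p.Prime := ⟨hp⟩
  obtain ⟨h, hh, hhs⟩ := hconj
  let H := closure ({r, s} : Set P)
  have : Group.IsNilpotent H := (hP.to_subgroup H).isNilpotent
  let r' : H := ⟨r, subset_closure (by simp)⟩
  let s' : H := ⟨s, subset_closure (by simp)⟩
  have hgen : closure {r', s'} = ⊤ := by
    convert closure_preimage_eq_top ({r, s} : Set P)
    ext
    simp [r', s', Subtype.ext_iff]
  have hconj' : IsConj r' s' := isConj_iff.mpr ⟨⟨h, hh⟩, Subtype.ext hhs⟩
  exact congrArg Subtype.val (Group.commute_of_isConj_of_closure_pair_eq_top hconj' hgen).eq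

/-- In a finite `p`-group with `p` an odd prime, if `s` is conjugate to `r` by an element
of the subgroup generated by `r` and `s`, then `r` and `s` commute. -/
theorem commute_of_conj_in_closure_of_odd_pGroup
    {p : ℕ} (hp : p.Prime) (hodd : Odd p) {P : Type*} [Group P] [Finite P]
    (hP : IsPGroup p P) (r s : P)
    (hconj : ∃ h ∈ Subgroup.closure ({r, s} : Set P), h * r * h⁻¹ = s) :
    r * s = s * r :=
  commute_of_conj_in_closure_of_odd_pGroup_general hp hP r s hconj
end

section
/- Let G be a finitely generated group that is nilpotent-by-finite (i.e., G has a nilpotent subgroup N of finite index), and let H be a subgroup of G such that for every g ∈ G there exists a positive integer n with gⁿ ∈ H. Then H has finite index in G. -/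
/-!
Induct on the nilpotency class. Modulo the centre `Z`, the image of `H` has finite index, so
`M = H Z` has finite index in `G` and is finitely generated. Since `M = H Z(M)`, the subgroup `H`
is normal in `M` and `M / H` is abelian; it is a finitely generated abelian torsion group, hence
finite. A finite-index nilpotent subgroup reduces the nilpotent-by-finite case to the nilpotent
one.
-/

namespace Subgroup

variable {G G' : Type*} [Group G] [Group G']

def ContainsPowers (H : Subgroup G) : Prop :=
  ∀ g : G, ∃ n : ℕ, 0 < n ∧ g ^ n ∈ H

theorem ContainsPowers.subgroupOf {H : Subgroup G} (hH : H.ContainsPowers) (K : Subgroup G) :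
    (H.subgroupOf K).ContainsPowers := fun g ↦ hH g

theorem ContainsPowers.map {H : Subgroup G} (hH : H.ContainsPowers) {f : G →* G'}
    (hf : Function.Surjective f) : (H.map f).ContainsPowers := by
  intro g'
  obtain ⟨g, rfl⟩ := hf g'
  obtain ⟨n, hn, hgn⟩ := hH g
  exact ⟨n, hn, map_pow f g n ▸ mem_map_of_mem f hgn⟩

theorem ContainsPowers.isMulTorsion_quotient {H : Subgroup G} [H.Normal]
    (hH : H.ContainsPowers) : IsMulTorsion (G ⧸ H) := by
  intro x
  obtain ⟨g, rfl⟩ := QuotientGroup.mk_surjective x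
  obtain ⟨n, hn, hgn⟩ := hH g
  exact isOfFinOrder_iff_pow_eq_one.mpr ⟨n, hn, (QuotientGroup.eq_one_iff _).mpr hgn⟩

theorem ContainsPowers.finiteIndex_of_center_quotient_eq_top [Group.FG G] {H : Subgroup G}
    [H.Normal] (hH : H.ContainsPowers) (hcenter : center (G ⧸ H) = ⊤) : H.FiniteIndex := by
  let := Group.commGroupOfCenterEqTop hcenter
  have : Finite (G ⧸ H) := CommGroup.finite_of_fg_isMulTorsion _ hH.isMulTorsion_quotient
  exact finiteIndex_of_finite_quotient

theorem map_center_le_center {f : G →* G'} (hf : Function.Surjective f) :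
    (center G).map f ≤ center G' := by
  rintro _ ⟨z, hz, rfl⟩
  refine mem_center_iff.mpr fun y ↦ ?_
  obtain ⟨g, rfl⟩ := hf y
  rw [← map_mul, ← map_mul, mem_center_iff.mp hz g]

theorem subgroupOf_center_le_center (K : Subgroup G) : (center G).subgroupOf K ≤ center K :=
  fun _ hz ↦ mem_center_iff.mpr fun k ↦ Subtype.ext (mem_center_iff.mp hz k)

theorem normal_of_sup_center_eq_top {H : Subgroup G} (hsup : H ⊔ center G = ⊤) : H.Normal :=
  normalizer_eq_top_iff.mp <| top_le_iff.mp <|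
    hsup ▸ sup_le le_normalizer (center_le_normalizer _)

theorem center_quotient_eq_top_of_sup_center_eq_top {H : Subgroup G} [H.Normal]
    (hsup : H ⊔ center G = ⊤) : center (G ⧸ H) = ⊤ :=
  top_le_iff.mp <| calc
    ⊤ = (⊤ : Subgroup G).map (QuotientGroup.mk' H) :=
      (map_top_of_surjective _ (QuotientGroup.mk'_surjective H)).symm
    _ = (center G).map (QuotientGroup.mk' H) := by
      rw [← hsup, map_sup, QuotientGroup.map_mk'_self, bot_sup_eq]
    _ ≤ center (G ⧸ H) := map_center_le_center (QuotientGroup.mk'_surjective H)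

theorem ContainsPowers.finiteIndex_of_sup_center_eq_top [Group.FG G] {H : Subgroup G}
    (hH : H.ContainsPowers) (hsup : H ⊔ center G = ⊤) : H.FiniteIndex :=
  have := normal_of_sup_center_eq_top hsup
  hH.finiteIndex_of_center_quotient_eq_top (center_quotient_eq_top_of_sup_center_eq_top hsup)

theorem finiteIndex_sup_of_finiteIndex_map {H N : Subgroup G} [N.Normal]
    [(H.map (QuotientGroup.mk' N)).FiniteIndex] : (H ⊔ N).FiniteIndex := by
  have hcomap := comap_map_eq (QuotientGroup.mk' N) H
  rw [QuotientGroup.ker_mk'] at hcomap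
  rw [finiteIndex_iff, ← hcomap, index_comap_of_surjective _ (QuotientGroup.mk'_surjective N)]
  exact FiniteIndex.index_ne_zero

theorem subgroupOf_sup_center_eq_top (H : Subgroup G) :
    H.subgroupOf (H ⊔ center G) ⊔ center ↥(H ⊔ center G) = ⊤ := by
  refine top_le_iff.mp (le_trans ?_ (sup_le_sup_left (subgroupOf_center_le_center _) _))
  rw [← subgroupOf_sup le_sup_left le_sup_right, subgroupOf_self]

theorem finiteIndex_of_finiteIndex_subgroupOf {H K : Subgroup G} [K.FiniteIndex]
    [(H.subgroupOf K).FiniteIndex] : H.FiniteIndex := by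
  rw [finiteIndex_iff, ← relIndex_top_right]
  exact relIndex_ne_zero_trans (H := H) (K := K) FiniteIndex.index_ne_zero
    (by rw [relIndex_top_right]; exact FiniteIndex.index_ne_zero)

theorem ContainsPowers.finiteIndex_of_isNilpotent [Group.IsNilpotent G] [Group.FG G]
    {H : Subgroup G} (hH : H.ContainsPowers) : H.FiniteIndex := by
  revert H
  refine Group.nilpotent_center_quotient_ind
    (P := fun G _ _ ↦ ∀ [Group.FG G] {H : Subgroup G}, H.ContainsPowers → H.FiniteIndex) G
    (fun _ _ _ _ _ _ ↦ inferInstance) fun G _ _ ih _ H hH ↦ ?_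
  have := ih (hH.map (QuotientGroup.mk'_surjective (center G)))
  have : (H ⊔ center G).FiniteIndex := finiteIndex_sup_of_finiteIndex_map
  have := (hH.subgroupOf _).finiteIndex_of_sup_center_eq_top (subgroupOf_sup_center_eq_top H)
  exact finiteIndex_of_finiteIndex_subgroupOf (K := H ⊔ center G)

end Subgroup

/-- (Malcev) If `G` is a finitely generated nilpotent-by-finite group and `H ≤ G` is a
subgroup such that every element of `G` has a positive power lying in `H`, then `H` has
finite index in `G`. -/
theorem finiteIndex_of_pow_mem
    {G : Type*} [Group G] (hfg : Group.FG G)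
    (N : Subgroup G) (hN : Group.IsNilpotent N) (hNfi : N.FiniteIndex)
    (H : Subgroup G) (hH : ∀ g : G, ∃ n : ℕ, 0 < n ∧ g ^ n ∈ H) :
    H.FiniteIndex := by
  have : (H.subgroupOf N).FiniteIndex :=
    (Subgroup.ContainsPowers.subgroupOf hH N).finiteIndex_of_isNilpotent
  exact Subgroup.finiteIndex_of_finiteIndex_subgroupOf (K := N)
end

section
/- Let G be a finitely generated nilpotent-by-finite group, let O ⊆ G be an infinite conjugacy class, and pick x ∈ O. Then there exists g ∈ G such that gⁿ*x*g⁻ⁿ ≠ x for every positive integer n. -/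
/-!
If every `g` had a power `gⁿ`, `n > 0`, commuting with `x`, then every element of the finitely
generated nilpotent group `N` would have a positive power in the centralizer of `x`. In a finitely
generated nilpotent group such a subgroup has finite index: induct on the nilpotency class and
pass to the quotient by the last nontrivial term `L` of the lower central series. This `L` is
central and finitely generated (by the commutators of lifts of generators of the previous term
with generators of the group), so modulo `H ∩ L` it is a finitely generated abelian torsion group,
hence finite. Thus the centralizer of `x` has finite index in `G`, and so the conjugacy class of
`x` is finite.
-/

open Subgroup
open scoped commutatorElement Pointwise

section Commutator

variable {G : Type*} [Group G]

theorem commutatorElement_mul_left_of_mem_center {a b c : G} (h : ⁅b, c⁆ ∈ center G) :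
    ⁅a * b, c⁆ = ⁅b, c⁆ * ⁅a, c⁆ := by
  rw [commutatorElement_mul_left_eq_conj_mul, mem_center_iff.mp h a, mul_inv_cancel_right]

theorem commutatorElement_inv_left_of_mem_center {a b : G} (h : ⁅a, b⁆ ∈ center G) :
    ⁅a⁻¹, b⁆ = ⁅a, b⁆⁻¹ := by
  rw [commutatorElement_inv_left, ← commutatorElement_inv, mul_assoc,
    ← mem_center_iff.mp (inv_mem h) a, inv_mul_cancel_left]

theorem commutatorElement_mul_right_of_mem_center {a b c : G} (h : ⁅a, c⁆ ∈ center G) :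
    ⁅a, b * c⁆ = ⁅a, b⁆ * ⁅a, c⁆ := by
  rw [commutatorElement_mul_right_eq_mul_conj, mul_assoc _ b, mem_center_iff.mp h b,
    mul_assoc, mul_inv_cancel_right]

theorem commutatorElement_inv_right_of_mem_center {a b : G} (h : ⁅a, b⁆ ∈ center G) :
    ⁅a, b⁻¹⁆ = ⁅a, b⁆⁻¹ := by
  rw [commutatorElement_inv_right, ← commutatorElement_inv, mul_assoc,
    ← mem_center_iff.mp (inv_mem h) b, inv_mul_cancel_left]

end Commutator

namespace Subgroup

variable {G : Type*} [Group G]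

/-- Since every `⁅p, g⁆` with `p ∈ P` is central, the commutator is multiplicative in each
argument on `P × G`, so generators of `P` modulo the center and generators of `G` suffice. -/
theorem commutator_top_le_closure_image2 {S T : Set G} (hS : closure S = ⊤) {P : Subgroup G}
    (hTP : T ⊆ P) (hP : P ≤ closure T ⊔ center G) (hPc : ⁅P, ⊤⁆ ≤ center G) :
    ⁅P, ⊤⁆ ≤ closure (Set.image2 (⁅·, ·⁆) T S) := by
  set K := closure (Set.image2 (⁅·, ·⁆) T S)
  have hcen : ∀ p ∈ P, ∀ g : G, ⁅p, g⁆ ∈ center G := fun p hp g =>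
    hPc (commutator_mem_commutator hp (mem_top g))
  have hclosureT : ∀ t ∈ closure T, ∀ s ∈ S, ⁅t, s⁆ ∈ K := by
    intro t ht s hs
    induction ht using closure_induction with
    | mem t ht => exact subset_closure (Set.mem_image2_of_mem ht hs)
    | one => rw [commutatorElement_one_left]; exact one_mem K
    | mul a b _ hb iha ihb =>
      rw [commutatorElement_mul_left_of_mem_center (hcen b ((closure_le P).mpr hTP hb) s)]
      exact mul_mem ihb iha
    | inv a ha iha =>
      rw [commutatorElement_inv_left_of_mem_center (hcen a ((closure_le P).mpr hTP ha) s)]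
      exact inv_mem iha
  have hgen : ∀ p ∈ P, ∀ s ∈ S, ⁅p, s⁆ ∈ K := by
    intro p hp s hs
    have hp' : p ∈ (closure T : Set G) * (center G : Set G) := by
      rw [← mul_normal]; exact hP hp
    obtain ⟨t, ht, z, hz, rfl⟩ := hp'
    have hzs : ⁅z, s⁆ = 1 := commutatorElement_eq_one_iff_mul_comm.mpr (mem_center_iff.mp hz s).symm
    rw [commutatorElement_mul_left_of_mem_center (hzs ▸ one_mem _), hzs, one_mul]
    exact hclosureT t ht s hs
  refine commutator_le.mpr fun p hp g hg => ?_
  rw [← hS] at hg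
  induction hg using closure_induction with
  | mem s hs => exact hgen p hp s hs
  | one => rw [commutatorElement_one_right]; exact one_mem K
  | mul a b _ _ iha ihb =>
    rw [commutatorElement_mul_right_of_mem_center (hcen p hp b)]
    exact mul_mem iha ihb
  | inv a _ iha =>
    rw [commutatorElement_inv_right_of_mem_center (hcen p hp a)]
    exact inv_mem iha

theorem FG.exists_finite_le_closure_sup_ker {G' : Type*} [Group G'] {f : G →* G'}
    {P : Subgroup G} (h : (P.map f).FG) :
    ∃ T ⊆ (P : Set G), T.Finite ∧ P ≤ closure T ⊔ f.ker := by
  obtain ⟨V, hV, hVfin⟩ := (fg_iff _).mp h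
  have hVP : V ⊆ f '' P := by rw [← coe_map, ← hV]; exact subset_closure
  obtain ⟨T, hTP, hTfin, hTV⟩ := Set.exists_subset_image_finite_and.mp ⟨V, hVP, hVfin, rfl⟩
  refine ⟨T, hTP, hTfin, ?_⟩
  rw [← comap_map_eq, MonoidHom.map_closure, ← hTV, hV]
  exact le_comap_map f P

theorem lowerCentralSeries_quotient_lowerCentralSeries_eq_bot (d : ℕ) :
    (⊤ : Subgroup (G ⧸ (⊤ : Subgroup G).lowerCentralSeries d)).lowerCentralSeries d = ⊥ := by
  rw [← map_top_of_surjective _ (QuotientGroup.mk'_surjective _), ← map_lowerCentralSeries,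
    Subgroup.map_eq_bot_iff, QuotientGroup.ker_mk']

theorem lowerCentralSeries_fg_of_succ_eq_bot [Group.FG G] {d : ℕ}
    (hd : (⊤ : Subgroup G).lowerCentralSeries (d + 1) = ⊥) :
    ((⊤ : Subgroup G).lowerCentralSeries d).FG := by
  induction d generalizing G with
  | zero => exact Group.fg_def.mp ‹_›
  | succ e ih =>
    set L := (⊤ : Subgroup G).lowerCentralSeries (e + 1)
    have hLc : L ≤ center G := commutator_top_right_eq_bot_iff_le_center.mp hd
    have hQ := ih (lowerCentralSeries_quotient_lowerCentralSeries_eq_bot (G := G) (e + 1))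
    rw [← map_top_of_surjective _ (QuotientGroup.mk'_surjective L), ← map_lowerCentralSeries]
      at hQ
    obtain ⟨T, hTP, hTfin, hT⟩ := hQ.exists_finite_le_closure_sup_ker
    rw [QuotientGroup.ker_mk'] at hT
    obtain ⟨S, hS, hSfin⟩ := Group.fg_iff.mp ‹_›
    refine (fg_iff L).mpr ⟨Set.image2 (⁅·, ·⁆) T S, le_antisymm ?_ ?_, hTfin.image2 _ hSfin⟩
    · exact (closure_le L).mpr (Set.image2_subset_iff.mpr fun t ht s _ =>
        commutator_mem_commutator (hTP ht) (mem_top s))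
    · exact commutator_top_le_closure_image2 hS hTP (hT.trans (sup_le_sup_left hLc _)) hLc

theorem relIndex_sup_of_normal (H N : Subgroup G) [N.Normal] :
    H.relIndex (H ⊔ N) = H.relIndex N := by
  refine (Nat.card_congr (Equiv.ofBijective _
    ⟨(quotientSubgroupOfEmbeddingOfLE H (le_sup_right : N ≤ H ⊔ N)).injective, ?_⟩)).symm
  intro q
  induction q using QuotientGroup.induction_on with
  | H k =>
    have hk : (k : G) ∈ (N : Set G) * (H : Set G) := by
      rw [← normal_mul, sup_comm]; exact k.2
    obtain ⟨n, hn, h, hh, hnh⟩ := hk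
    refine ⟨QuotientGroup.mk ⟨n, hn⟩, QuotientGroup.eq.mpr ?_⟩
    rw [mem_subgroupOf, coe_mul, coe_inv, coe_inclusion, ← hnh, inv_mul_cancel_left]
    exact hh

/-- The conjugacy class of `x` is by definition the `ConjAct G`-orbit of `x`. -/
theorem index_centralizer_singleton_eq_ncard (x : G) :
    (centralizer {x}).index = {y : G | ∃ g : G, g * x * g⁻¹ = y}.ncard := by
  rw [centralizer_eq_comap_stabilizer]
  exact (index_comap_of_surjective _ ConjAct.toConjAct.surjective).trans
    (MulAction.index_stabilizer _ x)

end Subgroup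

theorem CommGroup.finiteIndex_of_forall_exists_pow_mem {A : Type*} [CommGroup A] [Group.FG A]
    (B : Subgroup A) (hB : ∀ a : A, ∃ n, 0 < n ∧ a ^ n ∈ B) : B.FiniteIndex := by
  have : Finite (A ⧸ B) := CommGroup.finite_of_fg_isMulTorsion _ fun q => by
    induction q using QuotientGroup.induction_on with
    | H a =>
      obtain ⟨n, hn, ha⟩ := hB a
      exact isOfFinOrder_iff_pow_eq_one.mpr ⟨n, hn, by
        rw [← QuotientGroup.mk_pow, QuotientGroup.eq_one_iff]; exact ha⟩
  exact finiteIndex_of_finite_quotient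

open scoped IsMulCommutative in
theorem Group.IsNilpotent.finiteIndex_of_forall_exists_pow_mem {G : Type*} [Group G]
    [Group.FG G] [Group.IsNilpotent G] (H : Subgroup G)
    (hH : ∀ g : G, ∃ n, 0 < n ∧ g ^ n ∈ H) : H.FiniteIndex := by
  obtain ⟨d, hd⟩ := Subgroup.nilpotent_iff_lowerCentralSeries.mp ‹Group.IsNilpotent G›
  induction d generalizing G with
  | zero => exact finiteIndex_of_le (K := H) (H := ⊤) (hd.le.trans bot_le)
  | succ d ih =>
    set L := (⊤ : Subgroup G).lowerCentralSeries d
    have hLc : L ≤ center G := commutator_top_right_eq_bot_iff_le_center.mp hd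
    have hHmap : (H.map (QuotientGroup.mk' L)).FiniteIndex := by
      refine ih _ (fun q => ?_) (lowerCentralSeries_quotient_lowerCentralSeries_eq_bot d)
      obtain ⟨g, rfl⟩ := QuotientGroup.mk'_surjective L q
      obtain ⟨n, hn, hg⟩ := hH g
      exact ⟨n, hn, map_pow (QuotientGroup.mk' L) g n ▸ mem_map_of_mem _ hg⟩
    have hHL : (H ⊔ L).FiniteIndex := by
      rw [finiteIndex_iff, ← QuotientGroup.ker_mk' L, ← comap_map_eq,
        index_comap_of_surjective _ (QuotientGroup.mk'_surjective L)]
      exact hHmap.index_ne_zero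
    have : IsMulCommutative L := .of_comm fun a b => Subtype.ext (mem_center_iff.mp (hLc b.2) a)
    have : Group.FG L := (Group.fg_iff_subgroup_fg L).mpr (lowerCentralSeries_fg_of_succ_eq_bot hd)
    have hHinL := CommGroup.finiteIndex_of_forall_exists_pow_mem (H.subgroupOf L) fun l => by
      obtain ⟨n, hn, hl⟩ := hH l
      exact ⟨n, hn, by rwa [mem_subgroupOf, SubgroupClass.coe_pow]⟩
    rw [finiteIndex_iff, ← relIndex_mul_index (le_sup_left : H ≤ H ⊔ L), relIndex_sup_of_normal]
    exact mul_ne_zero hHinL.index_ne_zero hHL.index_ne_zero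

/-- If `G` is a finitely generated nilpotent-by-finite group and `O` is an infinite
conjugacy class with `x ∈ O`, then there is `g ∈ G` with `gⁿ * x * g⁻ⁿ ≠ x` for all
positive integers `n`. -/
theorem exists_powers_move_of_infinite_conjClass
    {G : Type*} [Group G] (hfg : Group.FG G)
    (N : Subgroup G) (hN : Group.IsNilpotent N) (hNfi : N.FiniteIndex)
    (x : G) (hO : ({y : G | ∃ g : G, g * x * g⁻¹ = y}).Infinite) :
    ∃ g : G, ∀ n : ℕ, 0 < n → g ^ n * x * (g ^ n)⁻¹ ≠ x := by
  by_contra! h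
  have hCN := Group.IsNilpotent.finiteIndex_of_forall_exists_pow_mem
    ((centralizer {x}).subgroupOf N) fun g => by
      obtain ⟨n, hn, hg⟩ := h g
      refine ⟨n, hn, ?_⟩
      rw [mem_subgroupOf, SubgroupClass.coe_pow, mem_centralizer_singleton_iff]
      exact mul_inv_eq_iff_eq_mul.mp hg
  have hC : (centralizer {x}).index ≠ 0 := by
    rw [← relIndex_top_right]
    exact relIndex_ne_zero_trans hCN.index_ne_zero (relIndex_top_right N ▸ hNfi.index_ne_zero)
  exact hO (Set.finite_of_ncard_ne_zero (index_centralizer_singleton_eq_ncard x ▸ hC))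
end

section
/- Let G be a finitely generated torsion-free nilpotent group (i.e., G is nilpotent, finitely generated, and no element other than the identity has finite order). Then every non-central conjugacy class of G is infinite; equivalently, for every x ∈ G, if the conjugacy class {g*x*g⁻¹ : g ∈ G} is finite, then x lies in the center of G. -/
/-- If `z * g * z⁻¹ = w * g` with `w` central, then `z ^ k * g * z⁻¹ ^ k = w ^ k * g`. -/
private lemma conj_pow_aux {G : Type*} [Group G] (z g w : G)
    (hw : w ∈ Subgroup.center G) (h : z * g * z⁻¹ = w * g) :
    ∀ k : ℕ, z ^ k * g * (z ^ k)⁻¹ = w ^ k * g := by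
  intro k
  induction k with
  | zero => simp
  | succ k ih =>
    have hcomm : z * w ^ k = w ^ k * z := ((Subgroup.mem_center_iff.mp
      (pow_mem hw k)) z)
    calc z ^ (k + 1) * g * (z ^ (k + 1))⁻¹
        = z * (z ^ k * g * (z ^ k)⁻¹) * z⁻¹ := by
          rw [pow_succ']; group
      _ = z * (w ^ k * g) * z⁻¹ := by rw [ih]
      _ = w ^ k * (z * g * z⁻¹) := by
          rw [← mul_assoc z (w ^ k) g, hcomm]; group
      _ = w ^ (k + 1) * g := by rw [h, pow_succ']; group

/-- Key induction: in a nilpotent group of class ≤ c whose center is torsion-free,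
every element with finite conjugacy class is central. -/
private lemma key_lemma : ∀ (c : ℕ) (G : Type u) [Group G] [Group.IsNilpotent G],
    Group.nilpotencyClass G ≤ c →
    (∀ z : G, z ∈ Subgroup.center G → z ≠ 1 → ¬ IsOfFinOrder z) →
    ∀ x : G, ({y : G | ∃ g : G, g * x * g⁻¹ = y}).Finite → x ∈ Subgroup.center G := by
  intro c
  induction c with
  | zero =>
    intro G _ _ hc _ x _
    have h0 : Group.nilpotencyClass G = 0 := Nat.le_zero.mp hc
    have : Subsingleton G := nilpotencyClass_zero_iff_subsingleton.mp h0
    exact Subgroup.mem_center_iff.mpr fun g => Subsingleton.elim _ _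
  | succ c ih =>
    intro G _ _ hc htf x hfin
    set Q := G ⧸ Subgroup.center G
    -- nilpotency class of the quotient
    have hQc : Group.nilpotencyClass Q ≤ c := by
      have h : Group.nilpotencyClass Q = Group.nilpotencyClass G - 1 :=
        nilpotencyClass_quotient_center
      omega
    -- the center of the quotient is torsion-free
    have htfQ : ∀ z : Q, z ∈ Subgroup.center Q → z ≠ 1 → ¬ IsOfFinOrder z := by
      intro zb hzb hne hfo
      obtain ⟨z, rfl⟩ := QuotientGroup.mk_surjective zb
      obtain ⟨n, hn, hzn⟩ := isOfFinOrder_iff_pow_eq_one.mp hfo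
      have hznc : z ^ n ∈ Subgroup.center G := by
        rw [← QuotientGroup.eq_one_iff (z ^ n)]
        simpa using hzn
      apply hne
      rw [QuotientGroup.eq_one_iff]
      rw [Subgroup.mem_center_iff]
      intro g
      -- w := z * g * z⁻¹ * g⁻¹ is central
      have hwc : z * g * z⁻¹ * g⁻¹ ∈ Subgroup.center G := by
        rw [← QuotientGroup.eq_one_iff]
        have := (Subgroup.mem_center_iff.mp hzb) (QuotientGroup.mk g)
        have h2 : (QuotientGroup.mk (z * g * z⁻¹ * g⁻¹) : Q)
            = QuotientGroup.mk z * QuotientGroup.mk g * (QuotientGroup.mk z)⁻¹ *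
              (QuotientGroup.mk g)⁻¹ := by rfl
        rw [h2, ← this]
        group
      set w := z * g * z⁻¹ * g⁻¹ with hw
      have hconj : z * g * z⁻¹ = w * g := by rw [hw]; group
      have hkey := conj_pow_aux z g w hwc hconj n
      have hzfix : z ^ n * g * (z ^ n)⁻¹ = g := by
        have := (Subgroup.mem_center_iff.mp hznc) g
        rw [← this]; group
      have hwn : w ^ n = 1 := by
        have : w ^ n * g = g := by rw [← hkey, hzfix]
        exact mul_right_cancel (by rw [this, one_mul])
      have hw1 : w = 1 := by
        by_contra hwne
        exact htf w hwc hwne (isOfFinOrder_iff_pow_eq_one.mpr ⟨n, hn, hwn⟩)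
      have : z * g * z⁻¹ = g := by rw [hconj, hw1, one_mul]
      calc g * z = (z * g * z⁻¹) * z := by
            rw [this]
        _ = z * g := by group
    -- the conjugacy class of x in Q is finite
    have hfinQ : ({y : Q | ∃ g : Q, g * QuotientGroup.mk x * g⁻¹ = y}).Finite := by
      apply (hfin.image (QuotientGroup.mk : G → Q)).subset
      rintro yb ⟨gb, rfl⟩
      obtain ⟨g, rfl⟩ := QuotientGroup.mk_surjective gb
      exact ⟨g * x * g⁻¹, ⟨g, rfl⟩, rfl⟩
    have hxQ : (QuotientGroup.mk x : Q) ∈ Subgroup.center Q :=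
      ih Q hQc htfQ (QuotientGroup.mk x) hfinQ
    -- now conclude x is central in G
    rw [Subgroup.mem_center_iff]
    intro g
    have hwc : g * x * g⁻¹ * x⁻¹ ∈ Subgroup.center G := by
      rw [← QuotientGroup.eq_one_iff]
      have := (Subgroup.mem_center_iff.mp hxQ) (QuotientGroup.mk g)
      have h2 : (QuotientGroup.mk (g * x * g⁻¹ * x⁻¹) : Q)
          = QuotientGroup.mk g * QuotientGroup.mk x * (QuotientGroup.mk g)⁻¹ *
            (QuotientGroup.mk x)⁻¹ := by rfl
      rw [h2, this]
      group
    set w := g * x * g⁻¹ * x⁻¹ with hw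
    have hconj : g * x * g⁻¹ = w * x := by rw [hw]; group
    have hw1 : w = 1 := by
      by_contra hwne
      have hnfo : ¬ IsOfFinOrder w := htf w hwc hwne
      have hinj : Function.Injective (fun k : ℕ => w ^ k * x) := by
        intro i j hij
        simp only [mul_left_inj] at hij
        exact injective_pow_iff_not_isOfFinOrder.mpr hnfo hij
      have hmem : ∀ k : ℕ, w ^ k * x ∈ {y : G | ∃ g : G, g * x * g⁻¹ = y} := by
        intro k
        exact ⟨g ^ k, conj_pow_aux g x w hwc hconj k⟩
      exact (Set.infinite_of_injective_forall_mem hinj hmem) hfin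
    have : g * x * g⁻¹ = x := by rw [hconj, hw1, one_mul]
    calc g * x = (g * x * g⁻¹) * g := by group
      _ = x * g := by rw [this]

/-- In a finitely generated torsion-free nilpotent group, every non-central conjugacy
class is infinite: if the conjugacy class of `x` is finite, then `x` is central. -/
theorem mem_center_of_finite_conjClass
    {G : Type*} [Group G] (hfg : Group.FG G) (hnil : Group.IsNilpotent G)
    (htf : ∀ g : G, g ≠ 1 → ¬ IsOfFinOrder g)
    (x : G) (hfin : ({y : G | ∃ g : G, g * x * g⁻¹ = y}).Finite) :
    x ∈ Subgroup.center G := by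
  exact key_lemma (Group.nilpotencyClass G) G le_rfl (fun z _ hz => htf z hz) x hfin
end

section
/- Let G be a finitely generated nilpotent group whose torsion subgroup T is nontrivial and finite of odd order. Then every finite conjugacy class of G is either abelian as a subrack (x*y*x⁻¹ = y for all x, y in the class) or of type C. -/
/-!
Modulo the torsion subgroup `T` the group is torsion-free nilpotent, and there `a ^ n` commuting
with `b` forces `a` to commute with `b`: for `v` commuting with `a ^ n`, a commutator `⁅v, a⁆`
that commutes with `a` satisfies `⁅v, a⁆ ^ n = ⁅v, a ^ n⁆ = 1`, so it is trivial, and the iterated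
commutators `⁅⋯⁅b, a⁆⋯, a⁆` eventually vanish. As the class of `x` is finite, some power of every
`g` centralises `x`, so all conjugates of `x` agree modulo `T`.

If two conjugates `r, s` do not commute, put `H = ⟨r, s⟩`. Then `H = (H ⊓ T) ⟨r⟩`, so the
`H`-classes `R, S` of `r` and `s` are `H ⊓ T`-orbits, of size dividing `|T|`, hence odd; they are
not singletons, so they have at least three elements. They are disjoint: if `s` were conjugate to
`r` in `H`, then `H` would be generated by `r` modulo `⁅H, H⁆`, and a nilpotent group that is
cyclic modulo its commutator subgroup is abelian.
-/

open scoped commutatorElement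

section Nilpotent

variable {G : Type*} [Group G]

theorem commutatorElement_pow_right_of_commute {v a : G} (h : Commute ⁅v, a⁆ a) (n : ℕ) :
    ⁅v, a ^ n⁆ = ⁅v, a⁆ ^ n := by
  have hconj : v * a * v⁻¹ = ⁅v, a⁆ * a := by group
  rw [commutatorElement_def, ← conj_pow, hconj, h.mul_pow, mul_inv_cancel_right]

theorem iterate_commutatorElement_mem_lowerCentralSeries (a v : G) (k : ℕ) :
    (fun w ↦ ⁅w, a⁆)^[k] v ∈ (⊤ : Subgroup G).lowerCentralSeries k := by
  induction k with
  | zero => exact Subgroup.mem_top v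
  | succ k ih =>
    rw [Function.iterate_succ_apply']
    exact Subgroup.commutator_mem_commutator ih (Subgroup.mem_top a)

theorem commute_of_commute_pow_left [Group.IsNilpotent G]
    (htf : ∀ g : G, IsOfFinOrder g → g = 1) {a b : G} {n : ℕ} (hn : n ≠ 0)
    (h : Commute (a ^ n) b) : Commute a b := by
  set D : G → G := fun w ↦ ⁅w, a⁆
  have hD : ∀ v, Commute (a ^ n) v → Commute (a ^ n) (D v) := fun v hv ↦
    (((hv.mul_right ((Commute.refl a).pow_left n)).mul_right hv.inv_right).mul_right
      ((Commute.refl a).pow_left n).inv_right)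
  have hkill : ∀ v, Commute (a ^ n) v → D (D v) = 1 → D v = 1 := fun v hv hDD ↦
    htf _ <| isOfFinOrder_iff_pow_eq_one.mpr ⟨n, Nat.pos_of_ne_zero hn, by
      rw [← commutatorElement_pow_right_of_commute (commutatorElement_eq_one_iff_commute.mp hDD),
        commutatorElement_eq_one_iff_commute.mpr hv.symm]⟩
  have hdesc : ∀ k v, Commute (a ^ n) v → D^[k + 1] v = 1 → D v = 1 := by
    intro k
    induction k with
    | zero => exact fun v _ h ↦ h
    | succ k ih =>
      intro v hv hk
      exact hkill v hv (ih (D v) (hD v hv) hk)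
  obtain ⟨m, hm⟩ := Subgroup.nilpotent_iff_lowerCentralSeries.mp ‹_›
  have hbot : D^[m + 1] b = 1 := by
    have := Subgroup.lowerCentralSeries_antitone ⊤ m.le_succ
      (iterate_commutatorElement_mem_lowerCentralSeries a b (m + 1))
    rwa [hm, Subgroup.mem_bot] at this
  exact (commutatorElement_eq_one_iff_commute.mp (hdesc m b h hbot)).symm

theorem QuotientGroup.commute_mk_of_mem_lowerCentralSeries {n : ℕ} {w : G}
    (hw : w ∈ (⊤ : Subgroup G).lowerCentralSeries n) (g : G) :
    Commute (w : G ⧸ (⊤ : Subgroup G).lowerCentralSeries (n + 1)) g := by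
  rw [← commutatorElement_eq_one_iff_commute]
  exact (QuotientGroup.eq_one_iff _).mpr
    (Subgroup.commutator_mem_commutator hw (Subgroup.mem_top g))

theorem commute_of_zpowers_sup_commutator_eq_top [Group.IsNilpotent G] {a : G}
    (h : Subgroup.zpowers a ⊔ commutator G = ⊤) (g₁ g₂ : G) : Commute g₁ g₂ := by
  have hdec : ∀ g : G, ∃ k : ℤ, ∃ w ∈ commutator G, a ^ k * w = g := by
    intro g
    have hg : g ∈ ((Subgroup.zpowers a ⊔ commutator G : Subgroup G) : Set G) := by
      rw [h]; trivial
    rw [Subgroup.mul_normal] at hg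
    obtain ⟨_, ⟨k, rfl⟩, w, hw, rfl⟩ := hg
    exact ⟨k, w, hw, rfl⟩
  -- modulo the next term of the lower central series, `G` is generated by `a` and central elements
  have hle : ∀ n, commutator G ≤ (⊤ : Subgroup G).lowerCentralSeries (n + 1) := by
    intro n
    induction n with
    | zero => exact le_rfl
    | succ n ih =>
      rw [commutator_def, Subgroup.commutator_le]
      rintro x - y -
      obtain ⟨k, w₁, hw₁, rfl⟩ := hdec x
      obtain ⟨j, w₂, hw₂, rfl⟩ := hdec y
      have hpow := ((Commute.refl a).zpow_zpow k j).map
        (QuotientGroup.mk' ((⊤ : Subgroup G).lowerCentralSeries (n + 1 + 1)))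
      have hw₁ := QuotientGroup.commute_mk_of_mem_lowerCentralSeries (ih hw₁)
      have hw₂ := QuotientGroup.commute_mk_of_mem_lowerCentralSeries (ih hw₂)
      have hcomm : Commute (↑(a ^ k) * ↑w₁ : G ⧸ (⊤ : Subgroup G).lowerCentralSeries (n + 1 + 1))
          (↑(a ^ j) * ↑w₂) :=
        (hpow.mul_right (hw₂ _).symm).mul_left ((hw₁ _).mul_right (hw₁ w₂))
      exact (QuotientGroup.eq_one_iff _).mp (commutatorElement_eq_one_iff_commute.mpr hcomm)
  obtain ⟨m, hm⟩ := Subgroup.nilpotent_iff_lowerCentralSeries.mp ‹_›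
  have hcomm := Subgroup.lowerCentralSeries_antitone ⊤ m.le_succ
    (hle m (Subgroup.commutator_mem_commutator (Subgroup.mem_top g₁) (Subgroup.mem_top g₂)))
  rw [hm, Subgroup.mem_bot] at hcomm
  exact commutatorElement_eq_one_iff_commute.mp hcomm

theorem commute_of_conj_mem_closure_pair [Group.IsNilpotent G] {r s h : G}
    (hh : h ∈ Subgroup.closure {r, s}) (hs : h * r * h⁻¹ = s) : Commute r s := by
  set H := Subgroup.closure {r, s}
  have hr : r ∈ H := Subgroup.subset_closure (by simp)
  have hsH : s ∈ H := Subgroup.subset_closure (by simp)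
  suffices htop : Subgroup.zpowers (⟨r, hr⟩ : H) ⊔ commutator H = ⊤ from
    (commute_of_zpowers_sup_commutator_eq_top htop ⟨r, hr⟩ ⟨s, hsH⟩).map H.subtype
  rw [eq_top_iff, ← Subgroup.closure_closure_coe_preimage, Subgroup.closure_le]
  rintro ⟨y, hy⟩ hy'
  obtain rfl | rfl : y = r ∨ y = s := hy'
  · exact Subgroup.mem_sup_left (Subgroup.mem_zpowers _)
  · have hs' : (⟨y, hy⟩ : H) = ⟨r, hr⟩ * ⁅(⟨r, hr⟩ : H)⁻¹, ⟨h, hh⟩⁆ :=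
      Subtype.ext (by simp [← hs, commutatorElement_def]; group)
    rw [hs']
    exact mul_mem (Subgroup.mem_sup_left (Subgroup.mem_zpowers _))
      (Subgroup.mem_sup_right (Subgroup.commutator_mem_commutator (Subgroup.mem_top _)
        (Subgroup.mem_top _)))

end Nilpotent

section Torsion

variable {G : Type*} [Group G]

theorem Subgroup.normal_of_mem_iff_isOfFinOrder {T : Subgroup G}
    (hT : ∀ g : G, g ∈ T ↔ IsOfFinOrder g) : T.Normal :=
  ⟨fun t ht g ↦ (hT _).mpr ((isConj_iff.mpr ⟨g, rfl⟩).isOfFinOrder ((hT t).mp ht))⟩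

theorem QuotientGroup.eq_one_of_isOfFinOrder {T : Subgroup G} [T.Normal]
    (hT : ∀ g : G, g ∈ T ↔ IsOfFinOrder g) {q : G ⧸ T} (hq : IsOfFinOrder q) : q = 1 := by
  induction q using QuotientGroup.induction_on with
  | H g =>
    obtain ⟨n, hn, hgn⟩ := isOfFinOrder_iff_pow_eq_one.mp hq
    rw [← QuotientGroup.mk_pow, QuotientGroup.eq_one_iff, hT] at hgn
    exact (QuotientGroup.eq_one_iff g).mpr ((hT g).mpr (hgn.of_pow hn.ne'))

theorem exists_pow_commute_of_finite_conjugates {x : G}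
    (hx : {y : G | ∃ g : G, g * x * g⁻¹ = y}.Finite) (g : G) :
    ∃ n ≠ 0, Commute (g ^ n) x := by
  have horbit : MulAction.orbit (ConjAct G) x = {y : G | ∃ g : G, g * x * g⁻¹ = y} := by
    ext y
    rw [Set.mem_ofPred_eq, ConjAct.mem_orbit_conjAct, isConj_comm, isConj_iff]
  have hindex : (MulAction.stabilizer (ConjAct G) x).index ≠ 0 := by
    rw [MulAction.index_stabilizer, horbit]
    exact (Set.ncard_pos hx).mpr ⟨x, 1, by group⟩ |>.ne'
  obtain ⟨n, hn, -, hmem⟩ := Subgroup.exists_pow_mem_of_index_ne_zero hindex (ConjAct.toConjAct g)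
  rw [MulAction.mem_stabilizer_iff, ← map_pow, ConjAct.toConjAct_smul] at hmem
  exact ⟨n, hn.ne', mul_inv_eq_iff_eq_mul.mp hmem⟩

theorem inv_mul_mem_of_finite_conjugates [Group.IsNilpotent G] {T : Subgroup G}
    (hT : ∀ g : G, g ∈ T ↔ IsOfFinOrder g) {x : G}
    (hx : {y : G | ∃ g : G, g * x * g⁻¹ = y}.Finite) {y z : G}
    (hy : ∃ g : G, g * x * g⁻¹ = y) (hz : ∃ g : G, g * x * g⁻¹ = z) :
    y⁻¹ * z ∈ T := by
  have := Subgroup.normal_of_mem_iff_isOfFinOrder hT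
  have hmem : ∀ g : G, x⁻¹ * (g * x * g⁻¹) ∈ T := by
    intro g
    obtain ⟨n, hn, hgx⟩ := exists_pow_commute_of_finite_conjugates hx g
    have hcomm : Commute (g : G ⧸ T) x :=
      commute_of_commute_pow_left (fun _ ↦ QuotientGroup.eq_one_of_isOfFinOrder hT) hn
        (hgx.map (QuotientGroup.mk' T))
    have hcommutator : x⁻¹ * (g * x * g⁻¹) = ⁅x⁻¹, g⁆ := by group
    rw [hcommutator, ← QuotientGroup.eq_one_iff]
    exact commutatorElement_eq_one_iff_commute.mpr hcomm.symm.inv_left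
  obtain ⟨g, rfl⟩ := hy
  obtain ⟨g', rfl⟩ := hz
  simpa [mul_assoc] using T.mul_mem (T.inv_mem (hmem g)) (hmem g')

end Torsion

namespace Subgroup

variable {G : Type*} [Group G]

def conjOrbit (H : Subgroup G) (r : G) : Set G := {y | ∃ h ∈ H, h * r * h⁻¹ = y}

variable {H : Subgroup G} {r : G}

theorem mem_conjOrbit_self (H : Subgroup G) (r : G) : r ∈ H.conjOrbit r :=
  ⟨1, H.one_mem, by group⟩

theorem conj_mem_conjOrbit {g y : G} (hg : g ∈ H) (hy : y ∈ H.conjOrbit r) :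
    g * y * g⁻¹ ∈ H.conjOrbit r := by
  obtain ⟨h, hh, rfl⟩ := hy
  exact ⟨g * h, H.mul_mem hg hh, by group⟩

theorem conjOrbit_subset {X : Set G} (hX : ∀ y ∈ X, ∀ g : G, g * y * g⁻¹ ∈ X) (hr : r ∈ X) :
    H.conjOrbit r ⊆ X := by
  rintro _ ⟨h, -, rfl⟩
  exact hX r hr h

theorem conjOrbit_subset_of_mem (hr : r ∈ H) : H.conjOrbit r ⊆ H := by
  rintro _ ⟨h, hh, rfl⟩
  exact H.mul_mem (H.mul_mem hh hr) (H.inv_mem hh)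

theorem isSubrack_conjOrbit_union {s : G} (hr : r ∈ H) (hs : s ∈ H) :
    IsSubrack (H.conjOrbit r ∪ H.conjOrbit s) := by
  have hsub := Set.union_subset (conjOrbit_subset_of_mem hr) (conjOrbit_subset_of_mem hs)
  have hconj : ∀ g ∈ H, ∀ z ∈ H.conjOrbit r ∪ H.conjOrbit s,
      g * z * g⁻¹ ∈ H.conjOrbit r ∪ H.conjOrbit s := fun g hg z hz ↦
    hz.imp (conj_mem_conjOrbit hg) (conj_mem_conjOrbit hg)
  intro y hy z hz
  refine ⟨hconj y (hsub hy) z hz, ?_⟩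
  simpa using hconj y⁻¹ (H.inv_mem (hsub hy)) z hz

theorem closure_conjOrbit_union_conjOrbit (r s : G) :
    closure ((closure {r, s}).conjOrbit r ∪ (closure {r, s}).conjOrbit s) = closure {r, s} := by
  refine le_antisymm ((closure_le _).mpr (Set.union_subset (conjOrbit_subset_of_mem ?_)
    (conjOrbit_subset_of_mem ?_))) (closure_mono ?_)
  · exact subset_closure (by simp)
  · exact subset_closure (by simp)
  · rintro _ (rfl | rfl)
    · exact Or.inl (mem_conjOrbit_self _ _)
    · exact Or.inr (mem_conjOrbit_self _ _)

theorem disjoint_conjOrbit_closure_pair [Group.IsNilpotent G] {s : G} (hrs : ¬Commute r s) :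
    Disjoint ((closure {r, s}).conjOrbit r) ((closure {r, s}).conjOrbit s) := by
  rw [Set.disjoint_left]
  rintro _ ⟨h₁, hh₁, rfl⟩ ⟨h₂, hh₂, hconj⟩
  refine hrs (commute_of_conj_mem_closure_pair (mul_mem (inv_mem hh₂) hh₁) ?_)
  calc h₂⁻¹ * h₁ * r * (h₂⁻¹ * h₁)⁻¹ = h₂⁻¹ * (h₁ * r * h₁⁻¹) * h₂ := by group
    _ = s := by rw [← hconj]; group

theorem conjOrbit_eq_conjOrbit_inf {N : Subgroup G} [N.Normal] (hr : r ∈ H)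
    (hH : H ≤ N ⊔ zpowers r) : H.conjOrbit r = (H ⊓ N).conjOrbit r := by
  refine Set.Subset.antisymm ?_ (fun _ ⟨h, hh, hy⟩ ↦ ⟨h, hh.1, hy⟩)
  rintro _ ⟨h, hh, rfl⟩
  have hh' : h ∈ ((N ⊔ zpowers r : Subgroup G) : Set G) := hH hh
  rw [normal_mul] at hh'
  obtain ⟨t, ht, _, ⟨k, rfl⟩, rfl⟩ := hh'
  have htH : t ∈ H := by
    simpa using H.mul_mem hh (H.zpow_mem (H.inv_mem hr) k)
  exact ⟨t, ⟨htH, ht⟩, by group⟩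

theorem card_conjOrbit_dvd_card (H : Subgroup G) (r : G) :
    Nat.card (H.conjOrbit r) ∣ Nat.card H := by
  let _ : MulAction H G :=
    MulAction.compHom G ((ConjAct.toConjAct : G ≃* ConjAct G).toMonoidHom.comp H.subtype)
  have horbit : H.conjOrbit r = MulAction.orbit H r := by
    ext y
    constructor
    · rintro ⟨h, hh, rfl⟩
      exact ⟨⟨h, hh⟩, rfl⟩
    · rintro ⟨h, rfl⟩
      exact ⟨h, h.2, rfl⟩
  rw [horbit, Nat.card_coe_set_eq, ← MulAction.index_stabilizer]
  exact index_dvd_card _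

theorem card_conjOrbit_closure_pair_dvd {N : Subgroup G} [N.Normal] {s : G} (h : r⁻¹ * s ∈ N) :
    Nat.card ((closure {r, s}).conjOrbit r) ∣ Nat.card N := by
  have hle : closure {r, s} ≤ N ⊔ zpowers r := by
    rw [closure_le]
    rintro _ (rfl | rfl)
    · exact mem_sup_right (mem_zpowers _)
    · simpa using mul_mem (mem_sup_right (mem_zpowers r)) (mem_sup_left h)
  rw [conjOrbit_eq_conjOrbit_inf (subset_closure (by simp)) hle]
  exact (card_conjOrbit_dvd_card _ r).trans (card_dvd_of_le inf_le_right)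

theorem two_lt_card_conjOrbit_of_odd {a : G} (ha : a ∈ H) (har : ¬Commute a r)
    (hodd : Odd (Nat.card (H.conjOrbit r))) : 2 < Nat.card (H.conjOrbit r) := by
  have hfin : (H.conjOrbit r).Finite :=
    Set.finite_coe_iff.mp (Nat.finite_of_card_ne_zero hodd.pos.ne')
  have hone : 1 < Nat.card (H.conjOrbit r) := by
    rw [Nat.card_coe_set_eq, Set.one_lt_ncard hfin]
    exact ⟨r, mem_conjOrbit_self H r, a * r * a⁻¹, ⟨a, ha, rfl⟩,
      fun h ↦ har (mul_inv_eq_iff_eq_mul.mp h.symm)⟩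
  obtain ⟨k, hk⟩ := hodd
  omega

theorem isTypeC_of_odd_card_conjOrbit [Group.IsNilpotent G] {X : Set G}
    (hX : ∀ y ∈ X, ∀ g : G, g * y * g⁻¹ ∈ X) {r s : G} (hr : r ∈ X) (hs : s ∈ X)
    (hrs : r * s * r⁻¹ ≠ s) (hoddr : Odd (Nat.card ((closure {r, s}).conjOrbit r)))
    (hodds : Odd (Nat.card ((closure {r, s}).conjOrbit s))) : IsTypeC X := by
  have hcomm : ¬Commute r s := fun h ↦ hrs (mul_inv_eq_of_eq_mul h.eq)
  have hrH : r ∈ closure {r, s} := subset_closure (by simp)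
  have hsH : s ∈ closure {r, s} := subset_closure (by simp)
  refine ⟨_, _, ⟨r, mem_conjOrbit_self _ _⟩, ⟨s, mem_conjOrbit_self _ _⟩,
    disjoint_conjOrbit_closure_pair hcomm,
    Set.union_subset (conjOrbit_subset hX hr) (conjOrbit_subset hX hs),
    isSubrack_conjOrbit_union hrH hsH, r, mem_conjOrbit_self _ _, s, mem_conjOrbit_self _ _, hrs,
    ?_, ?_, Or.inl (lt_min (two_lt_card_conjOrbit_of_odd hsH (fun h ↦ hcomm h.symm) hoddr)
      (two_lt_card_conjOrbit_of_odd hrH hcomm hodds))⟩ <;>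
  rw [closure_conjOrbit_union_conjOrbit] <;> rfl

end Subgroup

open Subgroup in
theorem finite_conjclass_abelian_or_typeC_of_odd_torsion_general
    {G : Type*} [Group G] (hnil : Group.IsNilpotent G)
    (T : Subgroup G) (hT : ∀ g : G, g ∈ T ↔ IsOfFinOrder g)
    (hTodd : Odd (Nat.card T))
    (x : G) (hOfin : ({y : G | ∃ g : G, g * x * g⁻¹ = y}).Finite) :
    (∀ y ∈ {y : G | ∃ g : G, g * x * g⁻¹ = y}, ∀ z ∈ {y : G | ∃ g : G, g * x * g⁻¹ = y},
      y * z * y⁻¹ = z) ∨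
    IsTypeC {y : G | ∃ g : G, g * x * g⁻¹ = y} := by
  set O := {y : G | ∃ g : G, g * x * g⁻¹ = y}
  by_cases habel : ∀ y ∈ O, ∀ z ∈ O, y * z * y⁻¹ = z
  · exact Or.inl habel
  push Not at habel
  obtain ⟨r, hr, s, hs, hrs⟩ := habel
  have := normal_of_mem_iff_isOfFinOrder hT
  have hodd : ∀ {y z : G}, y ∈ O → z ∈ O → Odd (Nat.card ((closure {y, z}).conjOrbit y)) :=
    fun hy hz ↦ hTodd.of_dvd_nat
      (card_conjOrbit_closure_pair_dvd (inv_mul_mem_of_finite_conjugates hT hOfin hy hz))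
  have hconj : ∀ y ∈ O, ∀ g : G, g * y * g⁻¹ ∈ O := by
    rintro _ ⟨g, rfl⟩ h
    exact ⟨h * g, by group⟩
  refine Or.inr (isTypeC_of_odd_card_conjOrbit hconj hr hs hrs (hodd hr hs) ?_)
  rw [Set.pair_comm]
  exact hodd hs hr

/-- Let `G` be a finitely generated nilpotent group whose torsion subgroup `T` is
nontrivial and finite of odd order. Then every finite conjugacy class of `G` is either
abelian as a subrack or of type C. -/
theorem finite_conjclass_abelian_or_typeC_of_odd_torsion
    {G : Type*} [Group G] (hfg : Group.FG G) (hnil : Group.IsNilpotent G)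
    (T : Subgroup G) (hT : ∀ g : G, g ∈ T ↔ IsOfFinOrder g)
    (hTfin : (T : Set G).Finite) (hTne : T ≠ ⊥) (hTodd : Odd (Nat.card T))
    (x : G) (hOfin : ({y : G | ∃ g : G, g * x * g⁻¹ = y}).Finite) :
    (∀ y ∈ {y : G | ∃ g : G, g * x * g⁻¹ = y}, ∀ z ∈ {y : G | ∃ g : G, g * x * g⁻¹ = y},
      y * z * y⁻¹ = z) ∨
    IsTypeC {y : G | ∃ g : G, g * x * g⁻¹ = y} :=
  finite_conjclass_abelian_or_typeC_of_odd_torsion_general hnil T hT hTodd x hOfin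
end

section
/- Let G be a finitely generated nilpotent group whose torsion subgroup T is finite, and let O be a finite conjugacy class in G. Then the cardinality of O divides the cardinality of T. -/
/-!
Write `|O_x| = [G : C_G(x)]` and induct on `|T|`. If `T = 1`, the factors of the upper central
series of `G` are torsion-free, so a commutator `[g, x]` lying in `Z_{i+1}` with `[g ^ k, x] = 1`
already lies in `Z_i`; as `C_G(x)` has finite index, every `g` has such a power, and descending the
series shows that `x` is central. Otherwise the normal subgroup `T` meets the centre in some
`M ≠ 1`, and `G / M` is nilpotent with torsion subgroup `T / M`. Let `C` be the preimage of the
centralizer of `xM`. By induction `[G : C] ∣ |T / M|`, and `g ↦ [g, x]` is a homomorphism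
`C → M` with kernel `C_G(x)`, so `[C : C_G(x)] ∣ |M|`.
-/

open scoped commutatorElement

theorem commutatorElement_pow_of_commute {G : Type*} [Group G] {g y : G} (h : Commute ⁅g, y⁆ g)
    (k : ℕ) : ⁅g ^ k, y⁆ = ⁅g, y⁆ ^ k := by
  induction k with
  | zero => simp
  | succ k ih =>
    rw [pow_succ', commutatorElement_mul_left_eq_conj_mul, ih, (h.pow_left k).symm.mul_inv_cancel,
      pow_succ]

theorem commutatorElement_mul_left_of_mem_center_s6 {G : Type*} [Group G] {a b x : G}
    (hb : ⁅b, x⁆ ∈ Subgroup.center G) : ⁅a * b, x⁆ = ⁅a, x⁆ * ⁅b, x⁆ := by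
  rw [commutatorElement_mul_left_eq_conj_mul, Subgroup.mem_center_iff.1 hb a, mul_inv_cancel_right]
  exact (Subgroup.mem_center_iff.1 hb _).symm

theorem QuotientGroup.isOfFinOrder_mk_iff {G : Type*} [Group G] {N : Subgroup G} [N.Normal]
    (hN : ∀ n ∈ N, IsOfFinOrder n) (g : G) : IsOfFinOrder (g : G ⧸ N) ↔ IsOfFinOrder g := by
  refine ⟨fun h => ?_, (mk' N).isOfFinOrder⟩
  obtain ⟨k, hk, hgk⟩ := isOfFinOrder_iff_pow_eq_one.1 h
  rw [← QuotientGroup.mk_pow, QuotientGroup.eq_one_iff] at hgk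
  exact (hN _ hgk).of_pow hk.ne'

namespace Subgroup

open QuotientGroup

variable {G : Type*} [Group G]

theorem index_centralizer_eq_card_conj (x : G) :
    (centralizer {x}).index = Nat.card {y : G | ∃ g : G, g * x * g⁻¹ = y} := by
  have horbit : MulAction.orbit (ConjAct G) x = {y : G | ∃ g : G, g * x * g⁻¹ = y} := by
    ext y
    rw [ConjAct.mem_orbit_conjAct, isConj_comm, isConj_iff]
    rfl
  rw [← horbit]
  exact Nat.card_congr ((MulAction.orbitEquivQuotientStabilizer (ConjAct G) x).trans
    (quotientEquivOfEq (ConjAct.stabilizer_eq_centralizer x))).symm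

theorem normal_of_forall_mem_iff_isOfFinOrder {T : Subgroup G}
    (hT : ∀ g, g ∈ T ↔ IsOfFinOrder g) : T.Normal :=
  ⟨fun t ht g => (hT _).2 (by simpa using (MulAut.conj g).toMonoidHom.isOfFinOrder ((hT t).1 ht))⟩

theorem mem_map_mk'_iff_isOfFinOrder {T N : Subgroup G} [N.Normal]
    (hT : ∀ g, g ∈ T ↔ IsOfFinOrder g) (hNT : N ≤ T) (q : G ⧸ N) :
    q ∈ T.map (mk' N) ↔ IsOfFinOrder q := by
  obtain ⟨g, rfl⟩ := mk_surjective q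
  rw [isOfFinOrder_mk_iff (fun n hn => (hT n).1 (hNT hn)), ← hT, ← coe_mk', ← mem_comap,
    comap_map_eq, ker_mk', sup_eq_left.2 hNT]

theorem card_map_mk'_mul_card {T N : Subgroup G} [N.Normal] (hNT : N ≤ T) :
    Nat.card (T.map (mk' N)) * Nat.card N = Nat.card T := by
  have hrel : N.relIndex T = Nat.card (T.map (mk' N)) := by
    rw [← relIndex_ker, ker_mk']
  rw [← hrel, mul_comm, ← relIndex_bot_left, ← relIndex_bot_left,
    relIndex_mul_relIndex _ _ _ bot_le hNT]

theorem eq_bot_of_inf_center_eq_bot [Group.IsNilpotent G] {N : Subgroup G} [N.Normal]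
    (h : N ⊓ center G = ⊥) : N = ⊥ := by
  have hinf : ∀ i, N ⊓ upperCentralSeries G i = ⊥ := by
    intro i
    induction i with
    | zero => rw [upperCentralSeries_zero, inf_bot_eq]
    | succ i ih =>
      refine (eq_bot_iff_forall _).2 fun a ⟨haN, ha⟩ => (eq_bot_iff_forall _).1 h a ⟨haN, ?_⟩
      refine mem_center_iff.2 fun y => (commutatorElement_eq_one_iff_mul_comm.1 ?_).symm
      exact (eq_bot_iff_forall _).1 ih _
        ⟨commutator_le_left N ⊤ (commutator_mem_commutator haN (mem_top y)), ha y⟩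
  obtain ⟨n, hn⟩ := Group.IsNilpotent.nilpotent G
  simpa [hn] using hinf n

theorem commutatorElement_pow_mem_iff {N : Subgroup G} [N.Normal] {g y : G}
    (h : ⁅g, y⁆ ∈ upperCentralSeriesStep N) (k : ℕ) : ⁅g ^ k, y⁆ ∈ N ↔ ⁅g, y⁆ ^ k ∈ N := by
  rw [upperCentralSeriesStep_eq_comap_center, mem_comap, mem_center_iff] at h
  rw [← ker_mk' N, MonoidHom.mem_ker, MonoidHom.mem_ker, map_commutatorElement, map_pow, map_pow,
    commutatorElement_pow_of_commute (by rw [← map_commutatorElement]; exact (h _).symm),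
    map_commutatorElement]

theorem mem_upperCentralSeries_of_pow_mem (htf : ∀ g : G, IsOfFinOrder g → g = 1) {k : ℕ}
    (hk : k ≠ 0) : ∀ (i : ℕ) {h : G}, h ∈ upperCentralSeries G (i + 1) →
      h ^ k ∈ upperCentralSeries G i → h ∈ upperCentralSeries G i
  | 0, h, _, hpow => by
    rw [upperCentralSeries_zero, mem_bot] at hpow ⊢
    exact htf h (isOfFinOrder_iff_pow_eq_one.2 ⟨k, Nat.pos_of_ne_zero hk, hpow⟩)
  | i + 1, _, hmem, hpow => fun y =>
    mem_upperCentralSeries_of_pow_mem htf hk i (hmem y)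
      ((commutatorElement_pow_mem_iff (N := upperCentralSeries G i) (hmem y) k).1 (hpow y))

end Subgroup

theorem commute_of_commute_pow {G : Type*} [Group G] [Group.IsNilpotent G]
    (htf : ∀ g : G, IsOfFinOrder g → g = 1) {g y : G} {k : ℕ} (hk : k ≠ 0)
    (h : Commute (g ^ k) y) : Commute g y := by
  have hdescend : ∀ i, ⁅g, y⁆ ∈ Subgroup.upperCentralSeries G (i + 1) →
      ⁅g, y⁆ ∈ Subgroup.upperCentralSeries G i :=
    fun i hi => Subgroup.mem_upperCentralSeries_of_pow_mem htf hk i hi <|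
      (Subgroup.commutatorElement_pow_mem_iff (N := Subgroup.upperCentralSeries G i) hi k).1 <| by
        rw [commutatorElement_eq_one_iff_commute.2 h]; exact one_mem _
  obtain ⟨n, hn⟩ := Group.IsNilpotent.nilpotent G
  have h0 := Nat.decreasingInduction
    (motive := fun i _ => ⁅g, y⁆ ∈ Subgroup.upperCentralSeries G i)
    (fun i _ => hdescend i) (by rw [hn]; exact Subgroup.mem_top _) (Nat.zero_le n)
  rwa [Subgroup.upperCentralSeries_zero, Subgroup.mem_bot,
    commutatorElement_eq_one_iff_commute] at h0

open Subgroup QuotientGroup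

theorem mem_center_of_index_centralizer_ne_zero {G : Type*} [Group G] [Group.IsNilpotent G]
    (htf : ∀ g : G, IsOfFinOrder g → g = 1) {x : G} (hx : (centralizer {x}).index ≠ 0) :
    x ∈ center G := by
  refine mem_center_iff.2 fun g => ?_
  obtain ⟨k, hk, -, hgk⟩ := exists_pow_mem_of_index_ne_zero hx g
  exact (commute_of_commute_pow (y := x) htf hk.ne' (mem_centralizer_singleton_iff.1 hgk)).eq

theorem relIndex_centralizer_dvd_card {G : Type*} [Group G] {Z : Subgroup G} [Z.Normal]
    (hZ : Z ≤ center G) (x : G) :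
    (centralizer {x}).relIndex ((centralizer {(x : G ⧸ Z)}).comap (mk' Z)) ∣ Nat.card Z := by
  set C := (centralizer {(x : G ⧸ Z)}).comap (mk' Z)
  have hmem : ∀ g ∈ C, ⁅g, x⁆ ∈ Z := fun g hg => by
    rw [← ker_mk' Z, MonoidHom.mem_ker, map_commutatorElement,
      commutatorElement_eq_one_iff_mul_comm]
    exact mem_centralizer_singleton_iff.1 hg
  let φ : C →* Z := MonoidHom.mk' (fun g => ⟨⁅g.1, x⁆, hmem g g.2⟩) fun a b =>
    Subtype.ext (commutatorElement_mul_left_of_mem_center_s6 (hZ (hmem b b.2)))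
  have hker : φ.ker = (centralizer {x}).subgroupOf C := by
    ext g
    rw [MonoidHom.mem_ker, mem_subgroupOf, mem_centralizer_singleton_iff, Subtype.ext_iff]
    exact commutatorElement_eq_one_iff_mul_comm
  rw [relIndex, ← hker, index_ker]
  exact card_subgroup_dvd_card φ.range

theorem index_centralizer_dvd_card_torsion {G : Type*} [Group G] [Group.IsNilpotent G]
    (T : Subgroup G) (hT : ∀ g, g ∈ T ↔ IsOfFinOrder g) (x : G)
    (hx : (centralizer {x}).index ≠ 0) : (centralizer {x}).index ∣ Nat.card T := by
  induction hn : Nat.card T using Nat.strong_induction_on generalizing G with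
  | _ n ih =>
  obtain rfl | hn0 := eq_or_ne n 0
  · exact dvd_zero _
  have : T.Normal := normal_of_forall_mem_iff_isOfFinOrder hT
  obtain rfl | hTne := eq_or_ne T ⊥
  · have hxZ := mem_center_of_index_centralizer_ne_zero (fun g hg => mem_bot.1 ((hT g).2 hg)) hx
    rw [index_eq_one.2 (centralizer_eq_top_iff_subset.2 (Set.singleton_subset_iff.2 hxZ))]
    exact one_dvd n
  set M := T ⊓ center G
  set C := (centralizer {(x : G ⧸ M)}).comap (mk' M)
  have hcard : Nat.card (T.map (mk' M)) * Nat.card M = n := hn ▸ card_map_mk'_mul_card inf_le_left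
  have hlt : Nat.card (T.map (mk' M)) < n := by
    have hM0 : Nat.card M ≠ 0 := right_ne_zero_of_mul (hcard ▸ hn0)
    have hM1 : Nat.card M ≠ 1 := fun h => hTne (eq_bot_of_inf_center_eq_bot (card_eq_one.1 h))
    rw [← hcard]
    exact lt_mul_of_one_lt_right (Nat.pos_of_ne_zero (left_ne_zero_of_mul (hcard ▸ hn0))) (by omega)
  have hxC : centralizer {x} ≤ C := fun g hg => mem_comap.2 <| by
    simpa [Set.image_singleton] using
      map_centralizer_le_centralizer_image {x} (mk' M) (mem_map_of_mem _ hg)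
  have hindex : (centralizer {x}).index =
      (centralizer {(x : G ⧸ M)}).index * (centralizer {x}).relIndex C := by
    rw [← relIndex_mul_index hxC, index_comap_of_surjective _ (mk'_surjective M), mul_comm]
  rw [hindex, ← hcard]
  exact mul_dvd_mul (ih _ hlt _ (mem_map_mk'_iff_isOfFinOrder hT inf_le_left) _
    (left_ne_zero_of_mul (hindex ▸ hx)) rfl) (relIndex_centralizer_dvd_card inf_le_right x)

theorem card_conjClass_dvd_card_torsion_general
    {G : Type*} [Group G] (hnil : Group.IsNilpotent G)
    (T : Subgroup G) (hT : ∀ g : G, g ∈ T ↔ IsOfFinOrder g)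
    (x : G) (hOfin : ({y : G | ∃ g : G, g * x * g⁻¹ = y}).Finite) :
    Nat.card ({y : G | ∃ g : G, g * x * g⁻¹ = y}) ∣ Nat.card T := by
  have hne : Nat.card {y : G | ∃ g : G, g * x * g⁻¹ = y} ≠ 0 := by
    have := hOfin.to_subtype
    exact Nat.card_ne_zero.2 ⟨⟨x, 1, by group⟩, inferInstance⟩
  rw [← index_centralizer_eq_card_conj] at hne ⊢
  exact index_centralizer_dvd_card_torsion T hT x hne

/-- If `G` is a finitely generated nilpotent group with finite torsion subgroup `T` and
`O` is a finite conjugacy class in `G`, then `|O|` divides `|T|`. -/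
theorem card_conjClass_dvd_card_torsion
    {G : Type*} [Group G] (hfg : Group.FG G) (hnil : Group.IsNilpotent G)
    (T : Subgroup G) (hT : ∀ g : G, g ∈ T ↔ IsOfFinOrder g)
    (hTfin : (T : Set G).Finite)
    (x : G) (hOfin : ({y : G | ∃ g : G, g * x * g⁻¹ = y}).Finite) :
    Nat.card ({y : G | ∃ g : G, g * x * g⁻¹ = y}) ∣ Nat.card T :=
  card_conjClass_dvd_card_torsion_general hnil T hT x hOfin
end

section
/- Let X and Y be racks and π : X → Y a surjective rack homomorphism (π(x ◃ y) = π(x) ◃ π(y) for all x, y ∈ X). Then there exists a surjective group homomorphism F : Inn X → Inn Y such that F(φ_x) = φ_{π(x)} for every x ∈ X. -/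
/-!
Pair each generator `φ_x` of `Inn X` with `φ_{π x}`. Because `π` is a rack homomorphism, every
element `(g, h)` of the subgroup generated by these pairs satisfies `π ∘ g = h ∘ π`, and since `π`
is surjective this determines `h` from `g`. That subgroup is therefore the graph of a homomorphism
from its first projection `Inn X` onto its second projection `Inn Y`.
-/

open Quandles

/-- The inner group of a rack `X`: the subgroup of the permutation group of `X`
generated by the left translations `φ_x = x ◃ -`. -/
def Rack.innerGroup (X : Type*) [Rack X] : Subgroup (Equiv.Perm X) :=
  Subgroup.closure (Set.range fun x : X => Rack.act' x)

open Function

namespace Subgroup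

variable {G₁ G₂ : Type*} [Group G₁] [Group G₂]

theorem exists_surjective_hom_of_injective_fst (H : Subgroup (G₁ × G₂))
    (hinj : Injective ((MonoidHom.fst G₁ G₂).domRestrict H)) {A : Subgroup G₁}
    {B : Subgroup G₂} (hA : H.map (MonoidHom.fst G₁ G₂) = A)
    (hB : H.map (MonoidHom.snd G₁ G₂) = B) :
    ∃ F : A →* B, Surjective F ∧ ∀ p ∈ H, ∀ hp : p.1 ∈ A, (F ⟨p.1, hp⟩ : G₂) = p.2 := by
  subst hA hB
  let e : H ≃* H.map (MonoidHom.fst G₁ G₂) :=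
    (MonoidHom.ofInjective hinj).trans
      (MulEquiv.subgroupCongr (MonoidHom.domRestrict_range H _))
  refine ⟨((MonoidHom.snd G₁ G₂).subgroupMap H).comp e.symm.toMonoidHom,
    (MonoidHom.subgroupMap_surjective _ H).comp e.symm.surjective, fun p hp hp₁ => ?_⟩
  have he : e.symm ⟨p.1, hp₁⟩ = ⟨p, hp⟩ := e.symm_apply_eq.mpr rfl
  change ((e.symm ⟨p.1, hp₁⟩ : H) : G₁ × G₂).2 = p.2
  rw [he]

end Subgroup

namespace Equiv.Perm

variable {α β : Type*}

def semiconjSubgroup (f : α → β) : Subgroup (Perm α × Perm β) where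
  carrier := {p | Semiconj f p.1 p.2}
  one_mem' := Semiconj.id_right
  mul_mem' hp hq := hp.comp_right hq
  inv_mem' {p} hp := hp.inverses_right p.1.rightInverse_symm p.2.leftInverse_symm

theorem injective_fst_domRestrict_of_le_semiconjSubgroup {f : α → β} (hf : Surjective f)
    {H : Subgroup (Perm α × Perm β)} (hH : H ≤ semiconjSubgroup f) :
    Injective ((MonoidHom.fst (Perm α) (Perm β)).domRestrict H) := by
  rintro ⟨p, hp⟩ ⟨q, hq⟩ h₁
  replace h₁ : p.1 = q.1 := h₁
  have h₂ : p.2 = q.2 := by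
    ext y
    obtain ⟨x, rfl⟩ := hf y
    rw [← hH hp x, ← hH hq x, h₁]
  exact Subtype.ext (Prod.ext h₁ h₂)

end Equiv.Perm

/-- A surjective rack homomorphism `π : X → Y` extends to a surjective group
homomorphism `F : Inn X → Inn Y` with `F(φ_x) = φ_{π(x)}` for every `x ∈ X`. -/
theorem innerGroup_map_of_surjective_rack_hom
    {X Y : Type*} [Rack X] [Rack Y] (π : X → Y)
    (hsurj : Function.Surjective π)
    (hhom : ∀ x y : X, π (x ◃ y) = π x ◃ π y) :
    ∃ F : Rack.innerGroup X →* Rack.innerGroup Y,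
      Function.Surjective F ∧
      ∀ x : X,
        (F ⟨Rack.act' x, Subgroup.subset_closure (Set.mem_range_self x)⟩ : Equiv.Perm Y)
          = Rack.act' (π x) := by
  let H : Subgroup (Equiv.Perm X × Equiv.Perm Y) :=
    Subgroup.closure (Set.range fun x => (Rack.act' x, Rack.act' (π x)))
  have hgen : ∀ x, (Rack.act' x, Rack.act' (π x)) ∈ H :=
    fun x => Subgroup.subset_closure (Set.mem_range_self x)
  have hsemiconj : H ≤ Equiv.Perm.semiconjSubgroup π := by
    rw [Subgroup.closure_le]
    rintro - ⟨x, rfl⟩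
    exact hhom x
  have hfst : H.map (MonoidHom.fst _ _) = Rack.innerGroup X := by
    rw [MonoidHom.map_closure, ← Set.range_comp]
    rfl
  have hsnd : H.map (MonoidHom.snd _ _) = Rack.innerGroup Y := by
    rw [MonoidHom.map_closure, ← Set.range_comp]
    exact congrArg Subgroup.closure (hsurj.range_comp fun y => Rack.act' y)
  obtain ⟨F, hFsurj, hF⟩ := H.exists_surjective_hom_of_injective_fst
    (Equiv.Perm.injective_fst_domRestrict_of_le_semiconjSubgroup hsurj hsemiconj) hfst hsnd
  exact ⟨F, hFsurj, fun x => hF _ (hgen x) _⟩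
end

section
/- Let G₁ and G₂ be groups, let X₁ be a finite subrack of G₁ that is of type C, and let X₂ be a nonempty finite subrack of G₂. Then X₁ × X₂ is a subrack of the direct product group G₁ × G₂ and is of type C. -/
/-- The second coordinate of any element of the closure of `Y ×ˢ {t}` conjugates `t`
to itself. -/
lemma snd_conj_eq {G₁ G₂ : Type*} [Group G₁] [Group G₂] {Y : Set G₁} (hY : Y.Nonempty)
    {t : G₂} {h : G₁ × G₂} (hh : h ∈ Subgroup.closure (Y ×ˢ ({t} : Set G₂))) :
    h.2 * t * h.2⁻¹ = t := by
  have h2 : h.2 ∈ Subgroup.closure ({t} : Set G₂) := by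
    have h3 := Subgroup.mem_map_of_mem (MonoidHom.snd G₁ G₂) hh
    rw [MonoidHom.map_closure] at h3
    have himg : ⇑(MonoidHom.snd G₁ G₂) '' (Y ×ˢ ({t} : Set G₂)) = ({t} : Set G₂) := by
      rw [MonoidHom.coe_snd]
      exact Set.snd_image_prod hY ({t} : Set G₂)
    rwa [himg] at h3
  obtain ⟨n, hn⟩ := Subgroup.mem_closure_singleton.mp h2
  rw [← hn]
  have hc : t ^ n * t = t * t ^ n := Commute.zpow_self t n
  rw [hc, mul_inv_cancel_right]

/-- The first coordinate projection of the closure of `Y ×ˢ {t}` is the closure of `Y`. -/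
lemma fst_map_closure {G₁ G₂ : Type*} [Group G₁] [Group G₂] (Y : Set G₁) (t : G₂) :
    (Subgroup.closure (Y ×ˢ ({t} : Set G₂))).map (MonoidHom.fst G₁ G₂) =
      Subgroup.closure Y := by
  rw [MonoidHom.map_closure]
  congr 1
  rw [MonoidHom.coe_fst]
  exact Set.fst_image_prod Y (Set.singleton_nonempty t)

/-- Product of a conjugation orbit with a singleton is a conjugation orbit. -/
lemma orbit_prod {G₁ G₂ : Type*} [Group G₁] [Group G₂] {Y : Set G₁} (hY : Y.Nonempty)
    (t : G₂) {R : Set G₁} {r : G₁}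
    (hR : R = {y | ∃ h ∈ Subgroup.closure Y, h * r * h⁻¹ = y}) :
    R ×ˢ ({t} : Set G₂) =
      {y | ∃ h ∈ Subgroup.closure (Y ×ˢ ({t} : Set G₂)), h * (r, t) * h⁻¹ = y} := by
  have hmap := fst_map_closure Y t
  ext ⟨a, b⟩
  simp only [Set.mem_prod, Set.mem_singleton_iff, Set.mem_setOf_eq]
  constructor
  · rintro ⟨ha, hb⟩
    rw [hR] at ha
    obtain ⟨h₁, hh₁, hconj⟩ := ha
    rw [← hmap] at hh₁
    obtain ⟨h, hh, hfst⟩ := hh₁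
    refine ⟨h, hh, ?_⟩
    have hsnd := snd_conj_eq hY hh
    obtain ⟨h1, h2⟩ := h
    simp only [Prod.mk_mul_mk, Prod.inv_mk, Prod.mk.injEq] at hsnd hfst ⊢
    exact ⟨by rw [show h1 = h₁ from hfst, hconj], by rw [hsnd, hb]⟩
  · rintro ⟨h, hh, hconj⟩
    have hsnd := snd_conj_eq hY hh
    have h1 : h.1 ∈ Subgroup.closure Y := by
      rw [← hmap]
      exact Subgroup.mem_map_of_mem (MonoidHom.fst G₁ G₂) hh
    obtain ⟨hc1, hc2⟩ := h
    simp only [Prod.mk_mul_mk, Prod.inv_mk, Prod.mk.injEq] at hconj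
    obtain ⟨ha, hb⟩ := hconj
    refine ⟨?_, by rw [← hb, hsnd]⟩
    rw [hR]
    exact ⟨hc1, h1, ha⟩

lemma card_prod_singleton {G₁ G₂ : Type*} (R : Set G₁) (t : G₂) :
    Nat.card (R ×ˢ ({t} : Set G₂) : Set (G₁ × G₂)) = Nat.card R := by
  rw [Set.prod_singleton]
  exact Nat.card_image_of_injective (fun a b hab => congrArg Prod.fst hab) R

/-- If `X₁` is a finite subrack of `G₁` of type C and `X₂` is a nonempty finite subrack
of `G₂`, then `X₁ ×ˢ X₂` is a subrack of `G₁ × G₂` of type C. -/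
theorem prod_subrack_typeC
    {G₁ G₂ : Type*} [Group G₁] [Group G₂]
    (X₁ : Set G₁) (X₂ : Set G₂)
    (hX₁fin : X₁.Finite) (hX₂fin : X₂.Finite)
    (hX₁ : IsSubrack X₁) (hX₂ : IsSubrack X₂)
    (hX₁C : IsTypeC X₁) (hX₂ne : X₂.Nonempty) :
    IsSubrack (X₁ ×ˢ X₂) ∧ IsTypeC (X₁ ×ˢ X₂) := by
  constructor
  · rintro x hx y hy
    exact ⟨⟨(hX₁ x.1 hx.1 y.1 hy.1).1, (hX₂ x.2 hx.2 y.2 hy.2).1⟩,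
           ⟨(hX₁ x.1 hx.1 y.1 hy.1).2, (hX₂ x.2 hx.2 y.2 hy.2).2⟩⟩
  · obtain ⟨R, S, hRne, hSne, hdisj, hsub, hsubrack, r, hr, s, hs, hrs, hReq, hSeq, hcard⟩ := hX₁C
    obtain ⟨t, ht⟩ := hX₂ne
    have hYne : (R ∪ S).Nonempty := hRne.mono Set.subset_union_left
    refine ⟨R ×ˢ ({t} : Set G₂), S ×ˢ ({t} : Set G₂), ?_, ?_, ?_, ?_, ?_, (r, t), ⟨hr, rfl⟩,
      (s, t), ⟨hs, rfl⟩, ?_, ?_, ?_, ?_⟩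
    · exact hRne.prod (Set.singleton_nonempty t)
    · exact hSne.prod (Set.singleton_nonempty t)
    · rw [Set.disjoint_left]
      rintro ⟨a, b⟩ ⟨ha, _⟩ ⟨ha', _⟩
      exact Set.disjoint_left.mp hdisj ha ha'
    · rw [← Set.union_prod]
      exact Set.prod_mono hsub (Set.singleton_subset_iff.mpr ht)
    · rw [← Set.union_prod]
      rintro x hx y hy
      simp only [Set.mem_prod, Set.mem_singleton_iff] at hx hy ⊢
      obtain ⟨hx1, hx2⟩ := hx
      obtain ⟨hy1, hy2⟩ := hy
      refine ⟨⟨(hsubrack x.1 hx1 y.1 hy1).1, ?_⟩, ⟨(hsubrack x.1 hx1 y.1 hy1).2, ?_⟩⟩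
      · show x.2 * y.2 * x.2⁻¹ = t
        rw [hx2, hy2, mul_inv_cancel_right]
      · show x.2⁻¹ * y.2 * x.2 = t
        rw [hx2, hy2, inv_mul_cancel, one_mul]
    · intro hcontra
      exact hrs (congrArg Prod.fst hcontra)
    · rw [← Set.union_prod]; exact orbit_prod hYne t hReq
    · rw [← Set.union_prod]; exact orbit_prod hYne t hSeq
    · rw [card_prod_singleton, card_prod_singleton]
      exact hcard
end

section
/- Let k be a field and let G be a finite nilpotent group of odd order such that [G,G] = Z(G). Let x ∈ G be such that its conjugacy class O_x is non-central (x ∉ Z(G)) and abelian as a subrack (all elements of O_x commute pairwise, so in particular O_x ⊆ G^x). Let χ : G^x → kˣ be a group homomorphism from the centralizer of x to the multiplicative group of k with χ(x) ≠ 1. Then there exists g ∈ G with g ∉ G^x such that χ((g⁻¹*x*g)*(g*x*g⁻¹)) ≠ 1. -/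
/-- Let `G` be a finite nilpotent group of odd order with `[G,G] = Z(G)`, let `x` have a
non-central conjugacy class which is abelian as a subrack, and let `χ : G^x → kˣ` be a
character of the centralizer of `x` with `χ(x) ≠ 1`. Then there exists `g ∉ G^x` with
`χ((g⁻¹xg)(gxg⁻¹)) ≠ 1`. -/
theorem exists_nontrivial_character_value
    {k : Type*} [Field k] {G : Type*} [Group G] [Fintype G]
    (hnil : Group.IsNilpotent G) (hodd : Odd (Fintype.card G))
    (hGG : commutator G = Subgroup.center G)
    (x : G) (hx : x ∉ Subgroup.center G)
    (hab : ∀ y ∈ {y : G | ∃ g : G, g * x * g⁻¹ = y},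
      ∀ z ∈ {y : G | ∃ g : G, g * x * g⁻¹ = y}, y * z * y⁻¹ = z)
    (χ : Subgroup.centralizer ({x} : Set G) →* kˣ)
    (hχx : χ ⟨x, by simp [Subgroup.mem_centralizer_iff]⟩ ≠ 1) :
    ∃ g : G, g ∉ Subgroup.centralizer ({x} : Set G) ∧
      ∃ hmem : (g⁻¹ * x * g) * (g * x * g⁻¹) ∈ Subgroup.centralizer ({x} : Set G),
        χ ⟨(g⁻¹ * x * g) * (g * x * g⁻¹), hmem⟩ ≠ 1 := by
  -- pick g not commuting with x
  obtain ⟨g, hg⟩ : ∃ g : G, ¬ (g * x = x * g) := by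
    by_contra h
    push_neg at h
    exact hx (Subgroup.mem_center_iff.mpr h)
  have hgc : g ∉ Subgroup.centralizer ({x} : Set G) := by
    intro hm
    exact hg ((Subgroup.mem_centralizer_iff.mp hm x rfl).symm)
  -- the commutator z = g x g⁻¹ x⁻¹ is central
  have hz : g * x * g⁻¹ * x⁻¹ ∈ Subgroup.center G := by
    rw [← hGG]
    have := Subgroup.commutator_mem_commutator (Subgroup.mem_top g) (Subgroup.mem_top x)
    simpa [commutatorElement_def, commutator] using this
  set z := g * x * g⁻¹ * x⁻¹ with hzdef
  have hzc : ∀ w : G, w * z = z * w := Subgroup.mem_center_iff.mp hz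
  have h1 : g * x * g⁻¹ = z * x := by rw [hzdef]; group
  have h2 : g⁻¹ * x * g = z⁻¹ * x := by
    have cg : Commute g⁻¹ z⁻¹ := (Commute.inv_right (Commute.inv_left (show Commute g z from hzc g)))
    have : x = z⁻¹ * (g * x * g⁻¹) := by rw [h1]; group
    calc g⁻¹ * x * g = g⁻¹ * (z⁻¹ * (g * x * g⁻¹)) * g := by rw [← this]
      _ = g⁻¹ * z⁻¹ * (g * x) := by group
      _ = z⁻¹ * x := by rw [cg.eq]; group
  have key : (g⁻¹ * x * g) * (g * x * g⁻¹) = x * x := by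
    rw [h1, h2]
    calc z⁻¹ * x * (z * x) = z⁻¹ * (x * z) * x := by group
      _ = z⁻¹ * (z * x) * x := by rw [hzc x]
      _ = x * x := by group
  have hxmem : x ∈ Subgroup.centralizer ({x} : Set G) := by
    simp [Subgroup.mem_centralizer_iff]
  have hmem : (g⁻¹ * x * g) * (g * x * g⁻¹) ∈ Subgroup.centralizer ({x} : Set G) := by
    rw [key]
    exact Subgroup.mul_mem _ hxmem hxmem
  refine ⟨g, hgc, hmem, ?_⟩
  have heq : (⟨(g⁻¹ * x * g) * (g * x * g⁻¹), hmem⟩ :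
      Subgroup.centralizer ({x} : Set G)) = ⟨x, hxmem⟩ * ⟨x, hxmem⟩ := Subtype.ext key
  rw [heq, map_mul]
  intro hcon
  set u := χ ⟨x, hxmem⟩ with hu
  apply hχx
  have h2dvd : orderOf u ∣ 2 := orderOf_dvd_of_pow_eq_one (by rw [pow_two]; exact hcon)
  have hNdvd : orderOf u ∣ Fintype.card G := by
    apply orderOf_dvd_of_pow_eq_one
    have hxN : (⟨x, hxmem⟩ : Subgroup.centralizer ({x} : Set G)) ^ Fintype.card G = 1 := by
      ext
      simp [pow_card_eq_one]
    rw [hu, ← map_pow, hxN, map_one]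
  have hcop : Nat.Coprime (Fintype.card G) 2 := hodd.coprime_two_right
  have : orderOf u ∣ 1 := hcop ▸ Nat.dvd_gcd hNdvd h2dvd
  have : u = 1 := orderOf_eq_one_iff.mp (Nat.dvd_one.mp this)
  simpa [hu] using this
end

section
/- Let K be a commutative ring, n a positive integer, r, s ∈ Kⁿ and t ∈ K. Each Heisenberg matrix X(a,b,c) is invertible with inverse X(−a,−b, a·b − c), and the set of conjugates {X(a,b,c) * X(r,s,t) * X(a,b,c)⁻¹ : a, b ∈ Kⁿ, c ∈ K} equals {X(r, s, t+ℓ) : ℓ ∈ I}, where I is the ideal of K generated by the elements r₁, …, rₙ, s₁, …, sₙ. -/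
open Matrix

/-- The Heisenberg matrix `X(a,b,c)`: the `(n+2)×(n+2)` identity matrix modified so that
its `(0, i)`-entry is `aᵢ` for `i = 1, …, n`, its `(i, n+1)`-entry is `bᵢ` for
`i = 1, …, n`, and its `(0, n+1)`-entry is `c`. -/
def heisenbergMatrix {K : Type*} [CommRing K] {n : ℕ} (a b : Fin n → K) (c : K) :
    Matrix (Fin (n + 2)) (Fin (n + 2)) K :=
  1 + ∑ k : Fin n, Matrix.single 0 k.succ.castSucc (a k)
    + ∑ k : Fin n, Matrix.single k.succ.castSucc (Fin.last (n + 1)) (b k)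
    + Matrix.single 0 (Fin.last (n + 1)) c

/-!
Writing `X(a,b,c) = 1 + N(a,b,c)`, the map `N` is additive and `N(a,b,c) N(a',b',c')` is the
corner matrix with entry `a·b'`, since the only composable pair of matrix units is
`(0, i)` followed by `(i, n+1)`. Hence `X(a,b,c) X(a',b',c') = X(a+a', b+b', c+c'+a·b')`, which
gives the inverse and shows that conjugating `X(r,s,t)` by `X(a,b,c)` adds `s·a − r·b` to the
corner. As `a` and `b` vary these corrections run through the ideal generated by the `rᵢ` and `sᵢ`.
-/

theorem Matrix.single_mul_single {l m o α : Type*} [DecidableEq l] [DecidableEq m]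
    [DecidableEq o] [Fintype m] [NonUnitalNonAssocSemiring α] (i : l) (j j' : m) (k : o)
    (c d : α) :
    single i j c * single j' k d = if j = j' then single i k (c * d) else 0 := by
  split_ifs with h
  · exact h ▸ single_mul_single_same c i j k d
  · exact single_mul_single_of_ne c i j j' h d

theorem Matrix.single_sum {m o ι α : Type*} [DecidableEq m] [DecidableEq o] [AddCommMonoid α]
    (i : m) (j : o) (s : Finset ι) (f : ι → α) :
    single i j (∑ x ∈ s, f x) = ∑ x ∈ s, single i j (f x) :=
  map_sum (singleAddMonoidHom i j) f s

theorem Fin.last_ne_castSucc_succ {n : ℕ} (k : Fin n) : Fin.last (n + 1) ≠ k.castSucc.succ := by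
  simp [Fin.ext_iff]
  omega

theorem Ideal.mem_span_range_union_range_iff {R ι κ : Type*} [CommSemiring R] [Fintype ι]
    [Fintype κ] {r : ι → R} {s : κ → R} {x : R} :
    x ∈ Ideal.span (Set.range r ∪ Set.range s) ↔ ∃ a b, r ⬝ᵥ a + s ⬝ᵥ b = x := by
  simp only [Ideal.span_union, Submodule.mem_sup, Ideal.mem_span_range_iff_exists_fun]
  constructor
  · rintro ⟨_, ⟨a, rfl⟩, _, ⟨b, rfl⟩, rfl⟩
    exact ⟨a, b, by simp only [dotProduct, mul_comm]⟩
  · rintro ⟨a, b, rfl⟩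
    exact ⟨_, ⟨a, rfl⟩, _, ⟨b, rfl⟩, by simp only [dotProduct, mul_comm]⟩

section

variable {K : Type*} [CommRing K] {n : ℕ}

def heisenbergNilpart (a b : Fin n → K) (c : K) : Matrix (Fin (n + 2)) (Fin (n + 2)) K :=
  ∑ k : Fin n, single 0 k.succ.castSucc (a k)
    + ∑ k : Fin n, single k.succ.castSucc (Fin.last (n + 1)) (b k)
    + single 0 (Fin.last (n + 1)) c

theorem heisenbergMatrix_eq_one_add_nilpart (a b : Fin n → K) (c : K) :
    heisenbergMatrix a b c = 1 + heisenbergNilpart a b c := by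
  simp only [heisenbergMatrix, heisenbergNilpart, add_assoc]

theorem heisenbergNilpart_add (a b a' b' : Fin n → K) (c c' : K) :
    heisenbergNilpart a b c + heisenbergNilpart a' b' c' =
      heisenbergNilpart (a + a') (b + b') (c + c') := by
  simp only [heisenbergNilpart, Pi.add_apply, single_add, Finset.sum_add_distrib]
  abel

theorem heisenbergNilpart_zero_zero (c : K) :
    heisenbergNilpart (0 : Fin n → K) 0 c = single 0 (Fin.last (n + 1)) c := by
  simp [heisenbergNilpart]

theorem heisenbergNilpart_mul (a b a' b' : Fin n → K) (c c' : K) :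
    heisenbergNilpart a b c * heisenbergNilpart a' b' c' =
      single 0 (Fin.last (n + 1)) (a ⬝ᵥ b') := by
  simp [heisenbergNilpart, add_mul, mul_add, Finset.sum_mul, Finset.mul_sum, single_mul_single,
    Fin.last_ne_castSucc_succ, dotProduct, single_sum]

theorem heisenbergMatrix_mul (a b a' b' : Fin n → K) (c c' : K) :
    heisenbergMatrix a b c * heisenbergMatrix a' b' c' =
      heisenbergMatrix (a + a') (b + b') (c + c' + a ⬝ᵥ b') := by
  calc heisenbergMatrix a b c * heisenbergMatrix a' b' c'
      = 1 + (heisenbergNilpart a b c + heisenbergNilpart a' b' c'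
          + heisenbergNilpart a b c * heisenbergNilpart a' b' c') := by
        simp only [heisenbergMatrix_eq_one_add_nilpart]
        noncomm_ring
    _ = heisenbergMatrix (a + a') (b + b') (c + c' + a ⬝ᵥ b') := by
        rw [heisenbergNilpart_mul, ← heisenbergNilpart_zero_zero, heisenbergNilpart_add,
          heisenbergNilpart_add, add_zero, add_zero, heisenbergMatrix_eq_one_add_nilpart]

theorem heisenbergMatrix_zero : heisenbergMatrix (0 : Fin n → K) 0 0 = 1 := by
  rw [heisenbergMatrix_eq_one_add_nilpart, heisenbergNilpart_zero_zero, single_zero, add_zero]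

theorem heisenbergMatrix_mul_inv (a b : Fin n → K) (c : K) :
    heisenbergMatrix a b c * heisenbergMatrix (-a) (-b) (a ⬝ᵥ b - c) = 1 := by
  rw [heisenbergMatrix_mul, ← heisenbergMatrix_zero]
  congr 1 <;> simp

theorem heisenbergMatrix_inv_mul (a b : Fin n → K) (c : K) :
    heisenbergMatrix (-a) (-b) (a ⬝ᵥ b - c) * heisenbergMatrix a b c = 1 := by
  rw [heisenbergMatrix_mul, ← heisenbergMatrix_zero]
  congr 1 <;> simp

theorem heisenbergMatrix_conj (a b r s : Fin n → K) (c t : K) :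
    heisenbergMatrix a b c * heisenbergMatrix r s t * heisenbergMatrix (-a) (-b) (a ⬝ᵥ b - c) =
      heisenbergMatrix r s (t + (s ⬝ᵥ a - r ⬝ᵥ b)) := by
  rw [heisenbergMatrix_mul, heisenbergMatrix_mul]
  congr 1
  · simp
  · simp
  · simp only [add_dotProduct, dotProduct_neg, dotProduct_comm a s]
    ring

end

theorem heisenbergMatrix_conjugates_general
    {K : Type*} [CommRing K] {n : ℕ}
    (r s : Fin n → K) (t : K) :
    (∀ (a b : Fin n → K) (c : K),
      heisenbergMatrix a b c * heisenbergMatrix (-a) (-b) (a ⬝ᵥ b - c) = 1 ∧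
      heisenbergMatrix (-a) (-b) (a ⬝ᵥ b - c) * heisenbergMatrix a b c = 1) ∧
    {M : Matrix (Fin (n + 2)) (Fin (n + 2)) K |
        ∃ (a b : Fin n → K) (c : K),
          M = heisenbergMatrix a b c * heisenbergMatrix r s t
                * heisenbergMatrix (-a) (-b) (a ⬝ᵥ b - c)} =
      {M : Matrix (Fin (n + 2)) (Fin (n + 2)) K |
        ∃ ℓ ∈ Ideal.span (Set.range r ∪ Set.range s),
          M = heisenbergMatrix r s (t + ℓ)} := by
  refine ⟨fun a b c => ⟨heisenbergMatrix_mul_inv a b c, heisenbergMatrix_inv_mul a b c⟩, ?_⟩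
  ext M
  simp only [heisenbergMatrix_conj, Set.mem_ofPred, Ideal.mem_span_range_union_range_iff]
  constructor
  · rintro ⟨a, b, c, rfl⟩
    exact ⟨_, ⟨-b, a, by rw [dotProduct_neg, neg_add_eq_sub]⟩, rfl⟩
  · rintro ⟨_, ⟨a, b, rfl⟩, rfl⟩
    exact ⟨b, -a, 0, by rw [dotProduct_neg, sub_neg_eq_add, add_comm (s ⬝ᵥ b)]⟩

/-- Every Heisenberg matrix `X(a,b,c)` is invertible with inverse `X(−a,−b, a·b − c)`,
and the set of conjugates of `X(r,s,t)` by Heisenberg matrices is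
`{X(r, s, t+ℓ) : ℓ ∈ I}` where `I` is the ideal generated by the entries of `r` and `s`. -/
theorem heisenbergMatrix_conjugates
    {K : Type*} [CommRing K] {n : ℕ} (hn : 0 < n)
    (r s : Fin n → K) (t : K) :
    (∀ (a b : Fin n → K) (c : K),
      heisenbergMatrix a b c * heisenbergMatrix (-a) (-b) (a ⬝ᵥ b - c) = 1 ∧
      heisenbergMatrix (-a) (-b) (a ⬝ᵥ b - c) * heisenbergMatrix a b c = 1) ∧
    {M : Matrix (Fin (n + 2)) (Fin (n + 2)) K |
        ∃ (a b : Fin n → K) (c : K),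
          M = heisenbergMatrix a b c * heisenbergMatrix r s t
                * heisenbergMatrix (-a) (-b) (a ⬝ᵥ b - c)} =
      {M : Matrix (Fin (n + 2)) (Fin (n + 2)) K |
        ∃ ℓ ∈ Ideal.span (Set.range r ∪ Set.range s),
          M = heisenbergMatrix r s (t + ℓ)} :=
  heisenbergMatrix_conjugates_general r s t
end

section
/- Let K be a commutative ring and let r₁₂, r₂₃, r₃₄ be units of K. Let R be the 4×4 upper unitriangular matrix over K with R[0,1] = r₁₂, R[1,2] = r₂₃, R[2,3] = r₃₄ and R[0,2] = R[1,3] = R[0,3] = 0. Then the conjugacy class of R in the group U of 4×4 upper unitriangular matrices over K is exactly the set of all matrices N ∈ U with N[0,1] = r₁₂, N[1,2] = r₂₃, N[2,3] = r₃₄ (and arbitrary entries N[0,2], N[1,3], N[0,3]). -/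
def IsUnitriangular {K : Type*} [CommRing K] (M : Matrix (Fin 4) (Fin 4) K) : Prop :=
  (∀ i, M i i = 1) ∧ ∀ i j : Fin 4, j < i → M i j = 0

section helpers
variable {K : Type*} [CommRing K]

lemma unitri_mk (a b c d e f : K) :
    IsUnitriangular !![1, a, b, c; 0, 1, d, e; 0, 0, 1, f; 0, 0, 0, 1] := by
  constructor
  · intro i
    fin_cases i <;> simp [Matrix.vecHead, Matrix.vecTail]
  · intro i j h
    fin_cases i <;> fin_cases j <;>
      first
        | exact absurd h (by decide)
        | simp [Matrix.vecHead, Matrix.vecTail]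

lemma mk_eq_unitri {A : Matrix (Fin 4) (Fin 4) K} (h : IsUnitriangular A) :
    A = !![1, A 0 1, A 0 2, A 0 3; 0, 1, A 1 2, A 1 3; 0, 0, 1, A 2 3; 0, 0, 0, 1] := by
  obtain ⟨h1, h0⟩ := h
  ext i j
  fin_cases i <;> fin_cases j <;>
    simp [Matrix.vecHead, Matrix.vecTail, h1, h0 0, h0 1, h0 2, h0 3,
      show ((0:Fin 4) < 1) from by decide, show ((0:Fin 4) < 2) from by decide,
      show ((0:Fin 4) < 3) from by decide, show ((1:Fin 4) < 2) from by decide,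
      show ((1:Fin 4) < 3) from by decide, show ((2:Fin 4) < 3) from by decide]

lemma mul_mk (a b c d e f a' b' c' d' e' f' : K) :
    !![1, a, b, c; 0, 1, d, e; 0, 0, 1, f; 0, 0, 0, 1] *
      !![1, a', b', c'; 0, 1, d', e'; 0, 0, 1, f'; 0, 0, 0, 1] =
    !![1, a + a', b + a*d' + b', c + a*e' + b*f' + c';
       0, 1, d + d', e + d*f' + e';
       0, 0, 1, f + f';
       0, 0, 0, 1] := by
  ext i j
  fin_cases i <;> fin_cases j <;>
    simp [Matrix.mul_apply, Fin.sum_univ_four, Matrix.vecHead, Matrix.vecTail] <;> ring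

lemma mk_zero : (!![1, 0, 0, 0; 0, 1, 0, 0; 0, 0, 1, 0; 0, 0, 0, 1] : Matrix (Fin 4) (Fin 4) K) = 1 := by
  ext i j
  fin_cases i <;> fin_cases j <;> simp [Matrix.one_apply, Matrix.vecHead, Matrix.vecTail]

end helpers

/-- Let `r₁₂, r₂₃, r₃₄` be units of a commutative ring `K` and let `R` be the upper
unitriangular matrix with superdiagonal `(r₁₂, r₂₃, r₃₄)` and zeros above. Then the
conjugacy class of `R` in the group of upper unitriangular 4×4 matrices consists exactly
of the unitriangular matrices `N` with `N[0,1] = r₁₂`, `N[1,2] = r₂₃`, `N[2,3] = r₃₄`. -/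
theorem conjClass_unitriangular_eq
    {K : Type*} [CommRing K] (r12 r23 r34 : Kˣ) :
    {N : Matrix (Fin 4) (Fin 4) K |
        ∃ A B : Matrix (Fin 4) (Fin 4) K, IsUnitriangular A ∧ IsUnitriangular B ∧
          A * B = 1 ∧ B * A = 1 ∧
          N = A * !![(1 : K), r12, 0, 0; 0, 1, r23, 0; 0, 0, 1, r34; 0, 0, 0, 1] * B} =
      {N : Matrix (Fin 4) (Fin 4) K |
        IsUnitriangular N ∧ N 0 1 = r12 ∧ N 1 2 = r23 ∧ N 2 3 = r34} := by
  ext N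
  simp only [Set.mem_setOf_eq]
  constructor
  · rintro ⟨A, B, hA, hB, hAB, hBA, hN⟩
    rw [mk_eq_unitri hA, mk_eq_unitri hB] at hN hAB
    rw [mul_mk, mul_mk] at hN
    rw [mul_mk] at hAB
    have h01 := congrFun (congrFun hAB 0) 1
    have h12 := congrFun (congrFun hAB 1) 2
    have h23 := congrFun (congrFun hAB 2) 3
    simp [Matrix.one_apply, Matrix.vecHead, Matrix.vecTail] at h01 h12 h23
    refine ⟨hN ▸ unitri_mk _ _ _ _ _ _, ?_, ?_, ?_⟩ <;>
        rw [hN] <;> simp [Matrix.vecHead, Matrix.vecTail]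
    · linear_combination h01
    · linear_combination h12
    · linear_combination h23
  · rintro ⟨hNu, h01, h12, h23⟩
    have hN' := mk_eq_unitri hNu
    rw [h01, h12, h23] at hN'
    have u23 : (↑r23⁻¹ : K) * ↑r23 = 1 := Units.inv_mul _
    have u34 : (↑r34⁻¹ : K) * ↑r34 = 1 := Units.inv_mul _
    obtain ⟨x, hx⟩ : ∃ x, N 0 2 = x := ⟨_, rfl⟩
    obtain ⟨y, hy⟩ : ∃ y, N 1 3 = y := ⟨_, rfl⟩
    obtain ⟨z, hz⟩ : ∃ z, N 0 3 = z := ⟨_, rfl⟩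
    rw [hx, hy, hz] at hN'
    refine ⟨!![1, (↑r12 * y * ↑r34⁻¹ + x) * ↑r23⁻¹, z * ↑r34⁻¹, 0;
               0, 1, y * ↑r34⁻¹, 0; 0, 0, 1, 0; 0, 0, 0, 1],
            !![1, -((↑r12 * y * ↑r34⁻¹ + x) * ↑r23⁻¹),
               ((↑r12 * y * ↑r34⁻¹ + x) * ↑r23⁻¹) * (y * ↑r34⁻¹) - z * ↑r34⁻¹, 0;
               0, 1, -(y * ↑r34⁻¹), 0; 0, 0, 1, 0; 0, 0, 0, 1],
            unitri_mk _ _ _ _ _ _, unitri_mk _ _ _ _ _ _, ?_, ?_, ?_⟩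
    · ext i j
      fin_cases i <;> fin_cases j <;>
        simp [Matrix.mul_apply, Fin.sum_univ_four, Matrix.one_apply,
          Matrix.vecHead, Matrix.vecTail] <;> ring
    · ext i j
      fin_cases i <;> fin_cases j <;>
        simp [Matrix.mul_apply, Fin.sum_univ_four, Matrix.one_apply,
          Matrix.vecHead, Matrix.vecTail] <;> ring
    · rw [hN', mul_mk, mul_mk]
      ext i j
      fin_cases i <;> fin_cases j <;>
        simp [Matrix.vecHead, Matrix.vecTail] <;>
        first
          | ring
          | linear_combination (-(↑r12 * y * ↑r34⁻¹ + x)) * u23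
          | linear_combination (-z) * u34
          | linear_combination (-y) * u34
end
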